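/- arXiv:2505.12387 — 6 statements merged into one kernel-verified Lean document; each statement's English description precedes it below -/
import Mathlib

section
/- (Master Balance Theorem, fixed-point form) Suppose ℓ(x, ·) satisfies the A-exponential symmetry ℓ(x, exp(λA)θ) = ℓ(x, θ) for all λ, x, θ, and θ* is a local minimum of F(θ) = E_x ℓ(x,θ) + γ‖θ‖² + (η/4) E_B ‖E_{x∈B} ∇ℓ(x,θ)‖². Then −η E_B [ (E_{x∈B}∇ℓ(x,θ*))ᵀ Ã (E_{x∈B}∇ℓ(x,θ*)) ] + 4γ (θ*)ᵀ Ã θ* = 0, where Ã = (A + Aᵀ)/2. -/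
open Matrix Finset

/-- Euclidean gradient of `f : ℝⁿ → ℝ`. -/
noncomputable def grad {n : ℕ} (f : (Fin n → ℝ) → ℝ) (θ : Fin n → ℝ) : Fin n → ℝ :=
  fun i => fderiv ℝ f θ (Pi.single i 1)

/-!
Move `θ*` along the symmetry orbit `t ↦ exp (t A) θ*`. The data term of `F` is constant there,
and by the chain rule each per-sample gradient, hence each batch gradient `G_b`, is carried to
`exp (-t Aᵀ) G_b`. So along the orbit `F` differs from a constant by
`γ ‖exp (t A) θ*‖² + (η/4) Σ_b q_b ‖exp (-t Aᵀ) G_b‖²`, whose derivative at `0` is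
`2γ θ*ᵀ A θ* - (η/2) Σ_b q_b G_bᵀ A G_b`. It vanishes since `0` is a local minimum, and only the
symmetric part `Ã` of `A` is seen by these quadratic forms.
-/
theorem fderiv_apply_eq_dotProduct_grad {n : ℕ} (f : (Fin n → ℝ) → ℝ) (θ v : Fin n → ℝ) :
    fderiv ℝ f θ v = v ⬝ᵥ grad f θ := by
  have h := (fderiv ℝ f θ : (Fin n → ℝ) →ₗ[ℝ] ℝ).pi_apply_eq_sum_univ v
  simp only [ContinuousLinearMap.coe_coe, smul_eq_mul] at h
  rw [h, dotProduct]
  refine Finset.sum_congr rfl fun i _ => ?_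
  congr 2
  ext j
  simp [Pi.single_apply, eq_comm]

theorem grad_comp_mulVec {m n : ℕ} {f : (Fin m → ℝ) → ℝ} (M : Matrix (Fin m) (Fin n) ℝ)
    {θ : Fin n → ℝ} (hf : DifferentiableAt ℝ f (M *ᵥ θ)) :
    grad (fun θ' => f (M *ᵥ θ')) θ = Mᵀ *ᵥ grad f (M *ᵥ θ) := by
  have hchain : fderiv ℝ (fun θ' => f (M *ᵥ θ')) θ
      = (fderiv ℝ f (M *ᵥ θ)).comp M.mulVecLin.toContinuousLinearMap :=
    (hf.hasFDerivAt.comp θ M.mulVecLin.toContinuousLinearMap.hasFDerivAt).fderiv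
  funext i
  rw [grad, hchain, ContinuousLinearMap.comp_apply, fderiv_apply_eq_dotProduct_grad,
    LinearMap.coe_toContinuousLinearMap', mulVecLin_apply, dotProduct_comm,
    dotProduct_mulVec, ← mulVec_transpose, dotProduct_single_one]

theorem HasDerivAt.dotProduct {𝕜 ι : Type*} [NontriviallyNormedField 𝕜] [Fintype ι]
    {u v : 𝕜 → ι → 𝕜} {u' v' : ι → 𝕜} {t : 𝕜}
    (hu : HasDerivAt u u' t) (hv : HasDerivAt v v' t) :
    HasDerivAt (fun s => u s ⬝ᵥ v s) (u' ⬝ᵥ v t + u t ⬝ᵥ v') t := by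
  simp only [_root_.dotProduct, ← Finset.sum_add_distrib]
  exact HasDerivAt.fun_sum fun i _ =>
    (hasDerivAt_pi.mp hu i).mul (hasDerivAt_pi.mp hv i)

open scoped Norms.Operator in
theorem hasDerivAt_exp_smul_mulVec {n : ℕ} (M : Matrix (Fin n) (Fin n) ℝ) (v : Fin n → ℝ)
    (t : ℝ) :
    HasDerivAt (fun s : ℝ => NormedSpace.exp (s • M) *ᵥ v)
      ((NormedSpace.exp (t • M) * M) *ᵥ v) t := by
  let L : Matrix (Fin n) (Fin n) ℝ →ₗ[ℝ] (Fin n → ℝ) :=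
    LinearMap.applyₗ v ∘ₗ Matrix.toLin'.toLinearMap
  exact L.toContinuousLinearMap.hasFDerivAt.comp_hasDerivAt t (hasDerivAt_exp_smul_const M t)

theorem grad_exp_smul_mulVec_of_invariant {n : ℕ} {f : (Fin n → ℝ) → ℝ}
    (hf : Differentiable ℝ f) (A : Matrix (Fin n) (Fin n) ℝ) (t : ℝ)
    (hinv : ∀ θ, f (NormedSpace.exp (t • A) *ᵥ θ) = f θ) (θ : Fin n → ℝ) :
    grad f (NormedSpace.exp (t • A) *ᵥ θ) = NormedSpace.exp (t • -Aᵀ) *ᵥ grad f θ := by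
  set M := NormedSpace.exp (t • A)
  have hchain := grad_comp_mulVec M (hf (M *ᵥ θ))
  rw [show (fun θ' => f (M *ᵥ θ')) = f from funext hinv] at hchain
  have hdet : IsUnit Mᵀ.det := by
    rw [det_transpose, ← isUnit_iff_isUnit_det]
    exact isUnit_exp _
  rw [smul_neg, exp_neg, ← transpose_smul, exp_transpose, hchain, mulVec_mulVec,
    nonsing_inv_mul _ hdet, one_mulVec]

theorem dotProduct_transpose_mulVec_self {ι R : Type*} [Fintype ι] [CommSemiring R]
    (A : Matrix ι ι R) (v : ι → R) : v ⬝ᵥ Aᵀ *ᵥ v = v ⬝ᵥ A *ᵥ v := by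
  rw [mulVec_transpose, dotProduct_comm, dotProduct_mulVec]

theorem dotProduct_half_add_transpose_mulVec_self {ι : Type*} [Fintype ι]
    (A : Matrix ι ι ℝ) (v : ι → ℝ) : v ⬝ᵥ ((2⁻¹ : ℝ) • (A + Aᵀ)) *ᵥ v = v ⬝ᵥ A *ᵥ v := by
  rw [smul_mulVec, add_mulVec, dotProduct_smul, dotProduct_add,
    dotProduct_transpose_mulVec_self, smul_eq_mul]
  ring

theorem hasDerivAt_exp_smul_mulVec_dotProduct_self {n : ℕ} (M : Matrix (Fin n) (Fin n) ℝ)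
    (v : Fin n → ℝ) :
    HasDerivAt (fun s : ℝ => NormedSpace.exp (s • M) *ᵥ v ⬝ᵥ NormedSpace.exp (s • M) *ᵥ v)
      (2 * (v ⬝ᵥ M *ᵥ v)) 0 := by
  have h := hasDerivAt_exp_smul_mulVec M v 0
  simp only [zero_smul, NormedSpace.exp_zero, one_mul] at h
  refine (h.dotProduct h).congr_deriv ?_
  simp only [zero_smul, NormedSpace.exp_zero, one_mulVec]
  rw [dotProduct_comm (M *ᵥ v)]
  ring

theorem stmt6_general {n : ℕ} {X B : Type} [Fintype X] [Fintype B]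
    (p : X → ℝ)
    (q : B → ℝ)
    (c : B → X → ℝ)
    (ℓ : X → (Fin n → ℝ) → ℝ) (hℓ : ∀ x, ContDiff ℝ 2 (ℓ x))
    (A : Matrix (Fin n) (Fin n) ℝ)
    (hsym : ∀ (x : X) (lam : ℝ) (θ : Fin n → ℝ),
      ℓ x ((NormedSpace.exp (lam • A)).mulVec θ) = ℓ x θ)
    (η γ : ℝ)
    (F : (Fin n → ℝ) → ℝ)
    (hF : ∀ θ, F θ = (∑ x, p x * ℓ x θ) + γ * (θ ⬝ᵥ θ)
      + (η / 4) * ∑ b, q b *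
          ((∑ x, c b x • grad (ℓ x) θ) ⬝ᵥ (∑ x, c b x • grad (ℓ x) θ)))
    (θstar : Fin n → ℝ) (hmin : IsLocalMin F θstar) :
    -η * (∑ b, q b *
        ((∑ x, c b x • grad (ℓ x) θstar) ⬝ᵥ
          ((2⁻¹ : ℝ) • (A + Aᵀ)).mulVec (∑ x, c b x • grad (ℓ x) θstar)))
      + 4 * γ * (θstar ⬝ᵥ ((2⁻¹ : ℝ) • (A + Aᵀ)).mulVec θstar) = 0 := by
  set G : B → Fin n → ℝ := fun b => ∑ x, c b x • grad (ℓ x) θstar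
  change -η * (∑ b, q b * (G b ⬝ᵥ ((2⁻¹ : ℝ) • (A + Aᵀ)) *ᵥ G b)) + _ = 0
  set φ : ℝ → Fin n → ℝ := fun t => NormedSpace.exp (t • A) *ᵥ θstar
  have hG : ∀ b t, ∑ x, c b x • grad (ℓ x) (φ t) = NormedSpace.exp (t • -Aᵀ) *ᵥ G b := by
    intro b t
    simp only [φ, G, mulVec_sum, mulVec_smul]
    refine Finset.sum_congr rfl fun x _ => ?_
    rw [grad_exp_smul_mulVec_of_invariant ((hℓ x).differentiable two_ne_zero) A t (hsym x t)]
  have hFφ : F ∘ φ = fun t => (∑ x, p x * ℓ x θstar) + γ * (φ t ⬝ᵥ φ t) + (η / 4) *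
      ∑ b, q b * (NormedSpace.exp (t • -Aᵀ) *ᵥ G b ⬝ᵥ NormedSpace.exp (t • -Aᵀ) *ᵥ G b) := by
    funext t
    simp only [Function.comp_apply, hF, hG, φ, hsym]
  have hderiv : HasDerivAt (F ∘ φ) (2 * γ * (θstar ⬝ᵥ A *ᵥ θstar) -
      (η / 2) * ∑ b, q b * (G b ⬝ᵥ A *ᵥ G b)) 0 := by
    rw [hFφ]
    refine ((((hasDerivAt_exp_smul_mulVec_dotProduct_self A θstar).const_mul γ).const_add _).add
      ((HasDerivAt.fun_sum fun b _ =>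
        (hasDerivAt_exp_smul_mulVec_dotProduct_self (-Aᵀ) (G b)).const_mul (q b)).const_mul _)
      ).congr_deriv ?_
    simp only [neg_mulVec, dotProduct_neg, dotProduct_transpose_mulVec_self, mul_neg,
      Finset.sum_neg_distrib, mul_left_comm (q _) 2, ← Finset.mul_sum]
    ring
  have hφ0 : φ 0 = θstar := by simp [φ]
  have hcrit := ((hφ0 ▸ hmin).comp_continuous
    (hasDerivAt_exp_smul_mulVec A θstar 0).continuousAt).hasDerivAt_eq_zero hderiv
  simp only [dotProduct_half_add_transpose_mulVec_self]
  linear_combination 2 * hcrit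

/-- (Master Balance Theorem, fixed-point form.)  Data `x` ranges over a finite type `X`
with probability weights `p`; minibatches are indexed by a finite type `B` with
distribution `q`, and a minibatch `b` averages samples with weights `c b`.  If the
per-sample loss has the `A`-exponential symmetry and `θ*` is a local minimum of the
entropic loss `F`, then the gradient/weight balance identity holds for `Ã = (A+Aᵀ)/2`. -/
theorem stmt6 {n : ℕ} {X B : Type} [Fintype X] [Fintype B]
    (p : X → ℝ) (hp : ∀ x, 0 ≤ p x) (hp1 : ∑ x, p x = 1)
    (q : B → ℝ) (hq : ∀ b, 0 ≤ q b) (hq1 : ∑ b, q b = 1)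
    (c : B → X → ℝ) (hc : ∀ b x, 0 ≤ c b x) (hc1 : ∀ b, ∑ x, c b x = 1)
    (ℓ : X → (Fin n → ℝ) → ℝ) (hℓ : ∀ x, ContDiff ℝ 2 (ℓ x))
    (A : Matrix (Fin n) (Fin n) ℝ)
    (hsym : ∀ (x : X) (lam : ℝ) (θ : Fin n → ℝ),
      ℓ x ((NormedSpace.exp (lam • A)).mulVec θ) = ℓ x θ)
    (η γ : ℝ)
    (F : (Fin n → ℝ) → ℝ)
    (hF : ∀ θ, F θ = (∑ x, p x * ℓ x θ) + γ * (θ ⬝ᵥ θ)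
      + (η / 4) * ∑ b, q b *
          ((∑ x, c b x • grad (ℓ x) θ) ⬝ᵥ (∑ x, c b x • grad (ℓ x) θ)))
    (θstar : Fin n → ℝ) (hmin : IsLocalMin F θstar) :
    -η * (∑ b, q b *
        ((∑ x, c b x • grad (ℓ x) θstar) ⬝ᵥ
          ((2⁻¹ : ℝ) • (A + Aᵀ)).mulVec (∑ x, c b x • grad (ℓ x) θstar)))
      + 4 * γ * (θstar ⬝ᵥ ((2⁻¹ : ℝ) • (A + Aᵀ)).mulVec θstar) = 0 :=
  stmt6_general p q c ℓ hℓ A hsym η γ F hF θstar hmin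
end

section
/- (Layer balance without weight decay) Consider a deep network whose per-sample loss is invariant under the rescaling transformation W_i ↦ e^λ W_i, W_j ↦ e^{−λ} W_j for layers i ≠ j. Then at any local minimum of the entropic loss with γ = 0, the expected squared gradient norms of the two layers coincide: E Tr[g_i g_iᵀ] = E Tr[g_j g_jᵀ], where g_k denotes the minibatch gradient with respect to W_k. -/
open Matrix Finset

/-- Gradient of a function of layered weights `θ : ∀ k, ℝ^{r k × s k}` with respect to the
`(a,b)` entry of layer `k`. -/
noncomputable def lgrad {D : ℕ} {r s : Fin D → ℕ}
    (f : (∀ k : Fin D, Fin (r k) → Fin (s k) → ℝ) → ℝ)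
    (θ : ∀ k : Fin D, Fin (r k) → Fin (s k) → ℝ) (k : Fin D) :
    Fin (r k) → Fin (s k) → ℝ :=
  fun a b => fderiv ℝ f θ (Pi.single k (Pi.single a (Pi.single b 1)))

/-!
The rescaling `θ ↦ (e^{t a_k} θ_k)_k` leaves every `ℓ x` invariant, so it fixes the data term
of `F` and, by the chain rule through this linear isomorphism, multiplies the layer-`k` gradient
by `e^{-t a_k}`. Along the orbit, `F` is therefore
`t ↦ const + (η/4) ∑_k e^{-2 t a_k} E‖g_k‖²`, and stationarity at the local minimum `t = 0`
gives `∑_k a_k E‖g_k‖² = 0`. For `a = e_i - e_j` this is `E‖g_i‖² = E‖g_j‖²`.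
-/

noncomputable section

variable {D : ℕ} {r s : Fin D → ℕ} {X B : Type} [Fintype X]

abbrev LayerParams (r s : Fin D → ℕ) : Type := ∀ k : Fin D, Fin (r k) → Fin (s k) → ℝ

def layerScale (c : Fin D → ℝ) (θ : LayerParams r s) : LayerParams r s := fun k => c k • θ k

theorem layerScale_single (c : Fin D → ℝ) (k : Fin D) (v : Fin (r k) → Fin (s k) → ℝ) :
    layerScale c (Pi.single k v : LayerParams r s) = c k • Pi.single k v := by
  funext k'
  rcases eq_or_ne k' k with rfl | hk
  · simp [layerScale]
  · simp [layerScale, Pi.single_eq_of_ne hk]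

theorem lgrad_layerScale {f : LayerParams r s → ℝ} {c : Fin D → ℝ} (hc : ∀ k, c k ≠ 0)
    (hf : ∀ θ, f (layerScale c θ) = f θ) (θ : LayerParams r s) (k : Fin D) :
    lgrad f (layerScale c θ) k = (c k)⁻¹ • lgrad f θ k := by
  let L : LayerParams r s ≃L[ℝ] LayerParams r s :=
    .piCongrRight fun k => .smulLeft (Units.mk0 (c k) (hc k))
  have hL : ⇑L = layerScale c := rfl
  -- `fderiv` of `f ∘ L` needs no differentiability of `f`, since `L` is an isomorphism.
  have hfderiv : fderiv ℝ f θ = (fderiv ℝ f (L θ)).comp (L : LayerParams r s →L[ℝ] _) := by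
    rw [← L.comp_right_fderiv, hL]
    exact congrArg (fderiv ℝ · θ) (funext fun θ => (hf θ).symm)
  funext a e
  have := congrArg (· (Pi.single k (Pi.single a (Pi.single e 1)))) hfderiv
  simp only [ContinuousLinearMap.coe_comp, ContinuousLinearEquiv.coe_coe, Function.comp_apply,
    hL, layerScale_single, map_smul, smul_eq_mul] at this
  simp only [lgrad, Pi.smul_apply, smul_eq_mul, this, inv_mul_cancel_left₀ (hc k)]


theorem layerScale_exp_single_sub_single {i j : Fin D} (hij : i ≠ j) (t : ℝ)
    (θ : LayerParams r s) :
    layerScale (fun k => Real.exp (t * (Pi.single i 1 - Pi.single j 1 : Fin D → ℝ) k)) θ =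
      Function.update (Function.update θ i (Real.exp t • θ i)) j (Real.exp (-t) • θ j) := by
  funext k
  rcases eq_or_ne k j with rfl | hkj
  · simp [layerScale, hij]
  rcases eq_or_ne k i with rfl | hki
  · simp [layerScale, hkj]
  · simp [layerScale, hkj, hki]

/-- `batchGradSq w ℓ θ k b = Tr[g_k gₖᵀ]` for the minibatch gradient `g_k` of batch `b` with
sample weights `w b`; `meanBatchGradSq` averages it over batches drawn with weights `q`. -/
def batchGradSq (w : B → X → ℝ) (ℓ : X → LayerParams r s → ℝ) (θ : LayerParams r s)
    (k : Fin D) (b : B) : ℝ :=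
  ∑ a : Fin (r k), ∑ e : Fin (s k), (∑ x, w b x * lgrad (ℓ x) θ k a e) ^ 2

def meanBatchGradSq [Fintype B] (q : B → ℝ) (w : B → X → ℝ) (ℓ : X → LayerParams r s → ℝ)
    (θ : LayerParams r s) (k : Fin D) : ℝ :=
  ∑ b, q b * batchGradSq w ℓ θ k b

theorem batchGradSq_layerScale {w : B → X → ℝ} {ℓ : X → LayerParams r s → ℝ} {c : Fin D → ℝ}
    (hc : ∀ k, c k ≠ 0) (hinv : ∀ x θ, ℓ x (layerScale c θ) = ℓ x θ) (θ : LayerParams r s)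
    (k : Fin D) (b : B) :
    batchGradSq w ℓ (layerScale c θ) k b = (c k)⁻¹ ^ 2 * batchGradSq w ℓ θ k b := by
  simp only [batchGradSq, lgrad_layerScale hc (hinv _), Pi.smul_apply, smul_eq_mul, mul_sum,
    ← mul_pow, mul_left_comm]

theorem sum_mul_meanBatchGradSq_eq_zero_of_isLocalMin [Fintype B] {p : X → ℝ} {q : B → ℝ}
    {w : B → X → ℝ} {ℓ : X → LayerParams r s → ℝ} {η : ℝ} (hη : η ≠ 0) {F : LayerParams r s → ℝ}
    (hF : ∀ θ, F θ = ∑ x, p x * ℓ x θ + η / 4 * ∑ b, q b * ∑ k, batchGradSq w ℓ θ k b)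
    (a : Fin D → ℝ) (hinv : ∀ x t θ, ℓ x (layerScale (fun k => Real.exp (t * a k)) θ) = ℓ x θ)
    {θ : LayerParams r s} (hmin : IsLocalMin F θ) :
    ∑ k, a k * meanBatchGradSq q w ℓ θ k = 0 := by
  set orbit : ℝ → LayerParams r s := fun t => layerScale (fun k => Real.exp (t * a k)) θ
  have horbit0 : orbit 0 = θ := by funext k; simp [orbit, layerScale]
  have hF_orbit : F ∘ orbit = fun t => ∑ x, p x * ℓ x θ
      + η / 4 * ∑ k, Real.exp (t * (-2 * a k)) * meanBatchGradSq q w ℓ θ k := by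
    funext t
    simp only [Function.comp_apply, hF, orbit, hinv, batchGradSq_layerScale
      (fun k => Real.exp_ne_zero _) (hinv · t), meanBatchGradSq, mul_sum]
    rw [sum_comm]
    refine congrArg _ (sum_congr rfl fun k _ => sum_congr rfl fun b _ => ?_)
    rw [← Real.exp_neg, ← Real.exp_nat_mul]
    ring_nf
  have hmin_orbit : IsLocalMin (F ∘ orbit) 0 :=
    (horbit0 ▸ hmin).comp_continuous
      (continuous_pi fun k => by simp only [orbit, layerScale]; fun_prop).continuousAt
  have hderiv : HasDerivAt (F ∘ orbit)
      (η / 4 * ∑ k, -2 * a k * meanBatchGradSq q w ℓ θ k) 0 := by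
    have hterm (k : Fin D) : HasDerivAt (fun t => Real.exp (t * (-2 * a k)) *
        meanBatchGradSq q w ℓ θ k) (-2 * a k * meanBatchGradSq q w ℓ θ k) 0 := by
      simpa using ((hasDerivAt_mul_const (x := 0) (-2 * a k)).exp).mul_const
        (meanBatchGradSq q w ℓ θ k)
    rw [hF_orbit]
    exact ((HasDerivAt.fun_sum fun k _ => hterm k).const_mul _).const_add _
  simpa [mul_assoc, ← mul_sum, hη] using hmin_orbit.hasDerivAt_eq_zero hderiv

end

theorem stmt9_general {D : ℕ} {r s : Fin D → ℕ} {X B : Type} [Fintype X] [Fintype B]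
    (p : X → ℝ)
    (q : B → ℝ)
    (c : B → X → ℝ)
    (ℓ : X → (∀ k : Fin D, Fin (r k) → Fin (s k) → ℝ) → ℝ)
    (i j : Fin D) (hij : i ≠ j)
    (hsym : ∀ (x : X) (lam : ℝ) (θ : ∀ k : Fin D, Fin (r k) → Fin (s k) → ℝ),
      ℓ x (Function.update (Function.update θ i (Real.exp lam • θ i)) j
            (Real.exp (-lam) • θ j)) = ℓ x θ)
    (η : ℝ) (hη : 0 < η)
    (F : (∀ k : Fin D, Fin (r k) → Fin (s k) → ℝ) → ℝ)
    (hF : ∀ θ, F θ = (∑ x, p x * ℓ x θ)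
      + (η / 4) * ∑ b, q b * ∑ k : Fin D, ∑ a : Fin (r k), ∑ e : Fin (s k),
          (∑ x, c b x * lgrad (ℓ x) θ k a e) ^ 2)
    (θstar : ∀ k : Fin D, Fin (r k) → Fin (s k) → ℝ)
    (hmin : IsLocalMin F θstar) :
    ∑ b, q b * ∑ a : Fin (r i), ∑ e : Fin (s i),
        (∑ x, c b x * lgrad (ℓ x) θstar i a e) ^ 2
      = ∑ b, q b * ∑ a : Fin (r j), ∑ e : Fin (s j),
          (∑ x, c b x * lgrad (ℓ x) θstar j a e) ^ 2 := by
  have hbalance := sum_mul_meanBatchGradSq_eq_zero_of_isLocalMin hη.ne' hF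
    (Pi.single i 1 - Pi.single j 1) (fun x t θ => by
      rw [layerScale_exp_single_sub_single hij, hsym]) hmin
  simp only [Pi.sub_apply, sub_mul, sum_sub_distrib, Pi.single_apply, ite_mul, one_mul, zero_mul,
    sum_ite_eq', mem_univ, if_true] at hbalance
  exact sub_eq_zero.mp hbalance

/-- (Layer balance without weight decay.)  If the per-sample loss is invariant under the
rescaling `W_i ↦ e^λ W_i`, `W_j ↦ e^{−λ} W_j` of two layers `i ≠ j`, then at any local
minimum of the entropic loss (with `γ = 0`) the expected squared minibatch-gradient norms
of the two layers coincide: `E Tr[gᵢgᵢᵀ] = E Tr[gⱼgⱼᵀ]`. -/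
theorem stmt9 {D : ℕ} {r s : Fin D → ℕ} {X B : Type} [Fintype X] [Fintype B]
    (p : X → ℝ) (hp : ∀ x, 0 ≤ p x) (hp1 : ∑ x, p x = 1)
    (q : B → ℝ) (hq : ∀ b, 0 ≤ q b) (hq1 : ∑ b, q b = 1)
    (c : B → X → ℝ) (hc : ∀ b x, 0 ≤ c b x) (hc1 : ∀ b, ∑ x, c b x = 1)
    (ℓ : X → (∀ k : Fin D, Fin (r k) → Fin (s k) → ℝ) → ℝ)
    (hℓ : ∀ x, ContDiff ℝ 2 (ℓ x))
    (i j : Fin D) (hij : i ≠ j)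
    (hsym : ∀ (x : X) (lam : ℝ) (θ : ∀ k : Fin D, Fin (r k) → Fin (s k) → ℝ),
      ℓ x (Function.update (Function.update θ i (Real.exp lam • θ i)) j
            (Real.exp (-lam) • θ j)) = ℓ x θ)
    (η : ℝ) (hη : 0 < η)
    (F : (∀ k : Fin D, Fin (r k) → Fin (s k) → ℝ) → ℝ)
    (hF : ∀ θ, F θ = (∑ x, p x * ℓ x θ)
      + (η / 4) * ∑ b, q b * ∑ k : Fin D, ∑ a : Fin (r k), ∑ e : Fin (s k),
          (∑ x, c b x * lgrad (ℓ x) θ k a e) ^ 2)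
    (θstar : ∀ k : Fin D, Fin (r k) → Fin (s k) → ℝ)
    (hmin : IsLocalMin F θstar) :
    ∑ b, q b * ∑ a : Fin (r i), ∑ e : Fin (s i),
        (∑ x, c b x * lgrad (ℓ x) θstar i a e) ^ 2
      = ∑ b, q b * ∑ a : Fin (r j), ∑ e : Fin (s j),
          (∑ x, c b x * lgrad (ℓ x) θstar j a e) ^ 2 :=
  stmt9_general p q c ℓ i j hij hsym η hη F hF θstar hmin
end

section
/- (Gradient alignment for factored layers) Suppose ℓ(x, W, U) = ℓ̃(x, WU) depends on matrices W and U only through the product WU. At any local minimum of F(W,U) = E ℓ + γ(‖W‖_F² + ‖U‖_F²) + (η/4) E_B ‖gradient‖², the matrix identity η E[G_Wᵀ G_W − G_U G_Uᵀ] = 4γ (WᵀW − U Uᵀ) holds, where G_W and G_U are the minibatch gradients with respect to W and U. -/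
/-! The loss term sees `(W, U)` only through `WU`, and `WU` is constant to first order along
`t ↦ (W - t WA, U + t AU)` for every `k × k` matrix `A`. Writing `D = ∇ℓ̃(WU)`, the gradients are
`G_W = D Uᵀ` and `G_U = Wᵀ D`, and `D` is stationary along the line, so `Ġ_W = G_W Aᵀ` and
`Ġ_U = -Aᵀ G_U`. Hence the derivative of `F` along the line, which vanishes at a local minimum, is
the Frobenius pairing of `(η/2) E[G_Wᵀ G_W - G_U G_Uᵀ] - 2γ (WᵀW - UUᵀ)` with `A`; the elementary
matrix `A = E_st` reads off the `(s, t)` entry. -/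

open Matrix Finset

/-- Entrywise product of two rectangular arrays, `(W·U)_{ab} = Σ_t W_{at} U_{tb}`. -/
def matmulF {m k n : ℕ} (W : Fin m → Fin k → ℝ) (U : Fin k → Fin n → ℝ) :
    Fin m → Fin n → ℝ :=
  fun a b => ∑ t, W a t * U t b

/-- Gradient of the per-sample loss `ℓ̃(x, WU)` with respect to `W`. -/
noncomputable def gradW {m k n : ℕ} {X : Type}
    (ℓ : X → (Fin m → Fin n → ℝ) → ℝ) (x : X)
    (W : Fin m → Fin k → ℝ) (U : Fin k → Fin n → ℝ) : Fin m → Fin k → ℝ :=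
  fun a b => fderiv ℝ
    (fun p : (Fin m → Fin k → ℝ) × (Fin k → Fin n → ℝ) => ℓ x (matmulF p.1 p.2))
    (W, U) (Pi.single a (Pi.single b 1), 0)

/-- Gradient of the per-sample loss `ℓ̃(x, WU)` with respect to `U`. -/
noncomputable def gradU {m k n : ℕ} {X : Type}
    (ℓ : X → (Fin m → Fin n → ℝ) → ℝ) (x : X)
    (W : Fin m → Fin k → ℝ) (U : Fin k → Fin n → ℝ) : Fin k → Fin n → ℝ :=
  fun a b => fderiv ℝ
    (fun p : (Fin m → Fin k → ℝ) × (Fin k → Fin n → ℝ) => ℓ x (matmulF p.1 p.2))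
    (W, U) (0, Pi.single a (Pi.single b 1))

section MatmulCalculus

variable {m k n : ℕ}

lemma matmulF_assoc {l : ℕ} (W : Fin m → Fin k → ℝ) (A : Fin k → Fin l → ℝ)
    (U : Fin l → Fin n → ℝ) : matmulF (matmulF W A) U = matmulF W (matmulF A U) := by
  ext a b
  simp only [matmulF, Finset.sum_mul, Finset.mul_sum, mul_assoc]
  exact Finset.sum_comm

lemma matmulF_neg_left (W : Fin m → Fin k → ℝ) (U : Fin k → Fin n → ℝ) :
    matmulF (-W) U = -matmulF W U := by
  ext a b
  simp [matmulF]

lemma matmulF_zero_right (W : Fin m → Fin k → ℝ) :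
    matmulF W (0 : Fin k → Fin n → ℝ) = 0 := by
  ext a b
  simp [matmulF]

lemma matmulF_zero_left (U : Fin k → Fin n → ℝ) :
    matmulF (0 : Fin m → Fin k → ℝ) U = 0 := by
  ext a b
  simp [matmulF]

lemma matmulF_single_left (a : Fin m) (r : Fin k) (U : Fin k → Fin n → ℝ) :
    matmulF (Pi.single a (Pi.single r 1)) U = ∑ b, U r b • Pi.single a (Pi.single b 1) := by
  ext a' b'
  by_cases h : a' = a <;> simp [matmulF, h, Pi.single_apply, Finset.sum_apply]

lemma matmulF_single_right (W : Fin m → Fin k → ℝ) (r : Fin k) (b : Fin n) :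
    matmulF W (Pi.single r (Pi.single b 1)) = ∑ a, W a r • Pi.single a (Pi.single b 1) := by
  ext a' b'
  by_cases h : b' = b <;> simp [matmulF, h, Pi.single_apply, Finset.sum_apply, ite_apply]

lemma differentiable_matmulF :
    Differentiable ℝ (fun p : (Fin m → Fin k → ℝ) × (Fin k → Fin n → ℝ) => matmulF p.1 p.2) := by
  unfold matmulF
  fun_prop

lemma HasDerivAt.matmulF {W : ℝ → Fin m → Fin k → ℝ} {U : ℝ → Fin k → Fin n → ℝ}
    {W' : Fin m → Fin k → ℝ} {U' : Fin k → Fin n → ℝ} {t : ℝ}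
    (hW : HasDerivAt W W' t) (hU : HasDerivAt U U' t) :
    HasDerivAt (fun s => _root_.matmulF (W s) (U s))
      (_root_.matmulF W' (U t) + _root_.matmulF (W t) U') t := by
  rw [hasDerivAt_pi] at hW hU ⊢
  intro a
  rw [hasDerivAt_pi]
  intro b
  simp only [_root_.matmulF, Pi.add_apply, ← Finset.sum_add_distrib]
  refine HasDerivAt.fun_sum fun j _ => ?_
  exact ((hasDerivAt_pi.1 (hW a)) j).mul ((hasDerivAt_pi.1 (hU j)) b)

end MatmulCalculus

section Gradients

variable {m k n : ℕ}

noncomputable def gradProd (f : (Fin m → Fin n → ℝ) → ℝ) (M : Fin m → Fin n → ℝ) :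
    Fin m → Fin n → ℝ :=
  fun a b => fderiv ℝ f M (Pi.single a (Pi.single b 1))

lemma hasDerivAt_add_smul {E : Type*} [NormedAddCommGroup E] [NormedSpace ℝ E] (x v : E)
    (t : ℝ) : HasDerivAt (fun s : ℝ => x + s • v) v t := by
  simpa using ((hasDerivAt_id t).smul_const v).const_add x

lemma fderiv_comp_matmulF {f : (Fin m → Fin n → ℝ) → ℝ} (W : Fin m → Fin k → ℝ)
    (U : Fin k → Fin n → ℝ) (hf : DifferentiableAt ℝ f (matmulF W U))
    (V : Fin m → Fin k → ℝ) (V' : Fin k → Fin n → ℝ) :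
    fderiv ℝ (fun p : (Fin m → Fin k → ℝ) × (Fin k → Fin n → ℝ) => f (matmulF p.1 p.2))
      (W, U) (V, V') = fderiv ℝ f (matmulF W U) (matmulF V U + matmulF W V') := by
  have hcomp := (hf.comp (W, U) (differentiable_matmulF (W, U))).hasFDerivAt
  have hline : HasDerivAt (fun t : ℝ => (W + t • V, U + t • V')) (V, V') 0 :=
    (hasDerivAt_add_smul W V 0).prodMk (hasDerivAt_add_smul U V' 0)
  refine (hcomp.comp_hasDerivAt_of_eq 0 hline (by simp)).unique ?_
  have hprod := (hasDerivAt_add_smul W V 0).matmulF (hasDerivAt_add_smul U V' 0)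
  simp only [zero_smul, add_zero] at hprod
  exact hf.hasFDerivAt.comp_hasDerivAt_of_eq 0 hprod (by simp)

lemma gradW_eq_sum {X : Type} (ℓ : X → (Fin m → Fin n → ℝ) → ℝ) (x : X)
    (W : Fin m → Fin k → ℝ) (U : Fin k → Fin n → ℝ)
    (hℓ : DifferentiableAt ℝ (ℓ x) (matmulF W U)) (a : Fin m) (r : Fin k) :
    gradW ℓ x W U a r = ∑ b, U r b * gradProd (ℓ x) (matmulF W U) a b := by
  simp only [gradW, fderiv_comp_matmulF W U hℓ, matmulF_zero_right, add_zero,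
    matmulF_single_left, map_sum, map_smul, smul_eq_mul, gradProd]

lemma gradU_eq_sum {X : Type} (ℓ : X → (Fin m → Fin n → ℝ) → ℝ) (x : X)
    (W : Fin m → Fin k → ℝ) (U : Fin k → Fin n → ℝ)
    (hℓ : DifferentiableAt ℝ (ℓ x) (matmulF W U)) (r : Fin k) (b : Fin n) :
    gradU ℓ x W U r b = ∑ a, W a r * gradProd (ℓ x) (matmulF W U) a b := by
  simp only [gradU, fderiv_comp_matmulF W U hℓ, matmulF_zero_left, zero_add,
    matmulF_single_right, map_sum, map_smul, smul_eq_mul, gradProd]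

end Gradients

section GaugeLine

variable {m k n : ℕ} (W : Fin m → Fin k → ℝ) (U : Fin k → Fin n → ℝ) (A : Fin k → Fin k → ℝ)

/-- The first-order part of the orbit `t ↦ (W e^{-tA}, e^{tA} U)` of the symmetry of `WU`;
the product changes along it only at order `t²`. -/
def gaugeLine (t : ℝ) : (Fin m → Fin k → ℝ) × (Fin k → Fin n → ℝ) :=
  (W - t • matmulF W A, U + t • matmulF A U)

@[simp] lemma gaugeLine_zero : gaugeLine W U A 0 = (W, U) := by
  simp [gaugeLine]

lemma hasDerivAt_gaugeLine_fst (t : ℝ) :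
    HasDerivAt (fun s => (gaugeLine W U A s).1) (-matmulF W A) t := by
  simpa [gaugeLine, sub_eq_add_neg] using hasDerivAt_add_smul W (-matmulF W A) t

lemma hasDerivAt_gaugeLine_snd (t : ℝ) :
    HasDerivAt (fun s => (gaugeLine W U A s).2) (matmulF A U) t :=
  hasDerivAt_add_smul U (matmulF A U) t

lemma hasDerivAt_matmulF_gaugeLine :
    HasDerivAt (fun t => matmulF (gaugeLine W U A t).1 (gaugeLine W U A t).2) 0 0 := by
  have h := (hasDerivAt_gaugeLine_fst W U A 0).matmulF (hasDerivAt_gaugeLine_snd W U A 0)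
  simpa only [gaugeLine_zero, matmulF_neg_left, matmulF_assoc, neg_add_cancel] using h

lemma hasDerivAt_comp_matmulF_gaugeLine {f : (Fin m → Fin n → ℝ) → ℝ}
    (hf : DifferentiableAt ℝ f (matmulF W U)) :
    HasDerivAt (fun t => f (matmulF (gaugeLine W U A t).1 (gaugeLine W U A t).2)) 0 0 := by
  simpa [Function.comp_def] using
    hf.hasFDerivAt.comp_hasDerivAt_of_eq 0 (hasDerivAt_matmulF_gaugeLine W U A) (by simp)

lemma hasDerivAt_gradProd_gaugeLine {f : (Fin m → Fin n → ℝ) → ℝ} (hf : ContDiff ℝ 2 f)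
    (a : Fin m) (b : Fin n) :
    HasDerivAt (fun t => gradProd f (matmulF (gaugeLine W U A t).1 (gaugeLine W U A t).2) a b)
      0 0 := by
  have hf' : Differentiable ℝ (fderiv ℝ f) :=
    (hf.fderiv_right (m := 1) (by norm_num)).differentiable (by norm_num)
  have h := (hf' (matmulF W U)).hasFDerivAt.comp_hasDerivAt_of_eq 0
    (hasDerivAt_matmulF_gaugeLine W U A) (by simp)
  simpa [gradProd] using h.clm_apply (hasDerivAt_const 0 (Pi.single a (Pi.single b 1)))

variable {X : Type} (ℓ : X → (Fin m → Fin n → ℝ) → ℝ)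

lemma hasDerivAt_gradW_gaugeLine (x : X) (hℓ : ContDiff ℝ 2 (ℓ x)) (a : Fin m) (r : Fin k) :
    HasDerivAt (fun t => gradW ℓ x (gaugeLine W U A t).1 (gaugeLine W U A t).2 a r)
      (∑ j, A r j * gradW ℓ x W U a j) 0 := by
  have hdiff : Differentiable ℝ (ℓ x) := hℓ.differentiable (by norm_num)
  simp only [gradW_eq_sum ℓ x _ _ (hdiff _)]
  have h := HasDerivAt.fun_sum (u := Finset.univ) fun b _ =>
    (hasDerivAt_pi.1 (hasDerivAt_pi.1 (hasDerivAt_gaugeLine_snd W U A 0) r) b).fun_mul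
      (hasDerivAt_gradProd_gaugeLine W U A hℓ a b)
  refine h.congr_deriv ?_
  simp only [gaugeLine_zero, matmulF, mul_zero, add_zero, Finset.sum_mul, Finset.mul_sum, mul_assoc]
  exact Finset.sum_comm

lemma hasDerivAt_gradU_gaugeLine (x : X) (hℓ : ContDiff ℝ 2 (ℓ x)) (r : Fin k) (b : Fin n) :
    HasDerivAt (fun t => gradU ℓ x (gaugeLine W U A t).1 (gaugeLine W U A t).2 r b)
      (-∑ j, A j r * gradU ℓ x W U j b) 0 := by
  have hdiff : Differentiable ℝ (ℓ x) := hℓ.differentiable (by norm_num)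
  simp only [gradU_eq_sum ℓ x _ _ (hdiff _)]
  have h := HasDerivAt.fun_sum (u := Finset.univ) fun a _ =>
    (hasDerivAt_pi.1 (hasDerivAt_pi.1 (hasDerivAt_gaugeLine_fst W U A 0) a) r).fun_mul
      (hasDerivAt_gradProd_gaugeLine W U A hℓ a b)
  refine h.congr_deriv ?_
  simp only [gaugeLine_zero, matmulF, Pi.neg_apply, mul_zero, add_zero, neg_mul,
    Finset.sum_neg_distrib, Finset.sum_mul, Finset.mul_sum]
  rw [Finset.sum_comm]
  exact congrArg _ (Finset.sum_congr rfl fun _ _ => Finset.sum_congr rfl fun _ _ => by ring)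

end GaugeLine

lemma HasDerivAt.sum_sum_sq {ι κ : Type*} [Fintype ι] [Fintype κ] {Y : ℝ → ι → κ → ℝ}
    {Y' : ι → κ → ℝ} {t : ℝ} (h : ∀ i j, HasDerivAt (fun s => Y s i j) (Y' i j) t) :
    HasDerivAt (fun s => ∑ i, ∑ j, Y s i j ^ 2) (2 * ∑ i, ∑ j, Y t i j * Y' i j) t := by
  simp only [Finset.mul_sum]
  refine HasDerivAt.fun_sum fun i _ => HasDerivAt.fun_sum fun j _ =>
    ((h i j).fun_pow 2).congr_deriv ?_
  ring

section Stationarity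

variable {m k n : ℕ} {X : Type} [Fintype X] (ℓ : X → (Fin m → Fin n → ℝ) → ℝ)

noncomputable def weightedGradW (w : X → ℝ) (W : Fin m → Fin k → ℝ) (U : Fin k → Fin n → ℝ) :
    Fin m → Fin k → ℝ :=
  fun a r => ∑ x, w x * gradW ℓ x W U a r

noncomputable def weightedGradU (w : X → ℝ) (W : Fin m → Fin k → ℝ) (U : Fin k → Fin n → ℝ) :
    Fin k → Fin n → ℝ :=
  fun r b => ∑ x, w x * gradU ℓ x W U r b

variable {ℓ} (w : X → ℝ)
  (W : Fin m → Fin k → ℝ) (U : Fin k → Fin n → ℝ) (A : Fin k → Fin k → ℝ)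

lemma hasDerivAt_weightedGradW_gaugeLine (hℓ : ∀ x, ContDiff ℝ 2 (ℓ x)) (a : Fin m) (r : Fin k) :
    HasDerivAt (fun t => weightedGradW ℓ w (gaugeLine W U A t).1 (gaugeLine W U A t).2 a r)
      (∑ j, A r j * weightedGradW ℓ w W U a j) 0 := by
  refine (HasDerivAt.fun_sum (u := Finset.univ) fun x _ =>
    (hasDerivAt_gradW_gaugeLine W U A ℓ x (hℓ x) a r).const_mul (w x)).congr_deriv ?_
  simp only [weightedGradW, Finset.mul_sum]
  rw [Finset.sum_comm]
  exact Finset.sum_congr rfl fun _ _ => Finset.sum_congr rfl fun _ _ => by ring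

lemma hasDerivAt_weightedGradU_gaugeLine (hℓ : ∀ x, ContDiff ℝ 2 (ℓ x)) (r : Fin k) (b : Fin n) :
    HasDerivAt (fun t => weightedGradU ℓ w (gaugeLine W U A t).1 (gaugeLine W U A t).2 r b)
      (-∑ j, A j r * weightedGradU ℓ w W U j b) 0 := by
  refine (HasDerivAt.fun_sum (u := Finset.univ) fun x _ =>
    (hasDerivAt_gradU_gaugeLine W U A ℓ x (hℓ x) r b).const_mul (w x)).congr_deriv ?_
  simp only [weightedGradU, Finset.mul_sum, mul_neg, Finset.sum_neg_distrib, neg_inj]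
  rw [Finset.sum_comm]
  exact Finset.sum_congr rfl fun _ _ => Finset.sum_congr rfl fun _ _ => by ring

variable {B : Type} [Fintype B] {p : X → ℝ} {q : B → ℝ} {c : B → X → ℝ} {η γ : ℝ}
  {F : (Fin m → Fin k → ℝ) × (Fin k → Fin n → ℝ) → ℝ}

lemma alignment_pairing_of_isLocalMin (hℓ : ∀ x, ContDiff ℝ 2 (ℓ x))
    (hF : ∀ W U, F (W, U) = (∑ x, p x * ℓ x (matmulF W U))
      + γ * ((∑ a, ∑ b, (W a b) ^ 2) + (∑ a, ∑ b, (U a b) ^ 2))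
      + (η / 4) * ∑ bt, q bt *
          ((∑ a, ∑ b, (∑ x, c bt x * gradW ℓ x W U a b) ^ 2)
            + (∑ a, ∑ b, (∑ x, c bt x * gradU ℓ x W U a b) ^ 2)))
    (hmin : IsLocalMin F (W, U)) :
    η * ∑ bt, q bt *
        ((∑ a, ∑ r, weightedGradW ℓ (c bt) W U a r * ∑ j, A r j * weightedGradW ℓ (c bt) W U a j)
          - ∑ r, ∑ b, weightedGradU ℓ (c bt) W U r b * ∑ j, A j r * weightedGradU ℓ (c bt) W U j b)
      = 4 * γ * ((∑ a, ∑ r, W a r * matmulF W A a r) - ∑ r, ∑ b, U r b * matmulF A U r b) := by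
  have hloss := HasDerivAt.fun_sum (u := Finset.univ) fun x _ =>
    (hasDerivAt_comp_matmulF_gaugeLine W U A
      ((hℓ x).differentiable (by norm_num) _)).const_mul (p x)
  have hreg := ((HasDerivAt.sum_sum_sq fun a r =>
      hasDerivAt_pi.1 (hasDerivAt_pi.1 (hasDerivAt_gaugeLine_fst W U A 0) a) r).fun_add
    (HasDerivAt.sum_sum_sq fun r b =>
      hasDerivAt_pi.1 (hasDerivAt_pi.1 (hasDerivAt_gaugeLine_snd W U A 0) r) b)).const_mul γ
  have hpen := (HasDerivAt.fun_sum (u := Finset.univ) fun bt _ =>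
    ((HasDerivAt.sum_sum_sq fun a r =>
        hasDerivAt_weightedGradW_gaugeLine (c bt) W U A hℓ a r).fun_add
      (HasDerivAt.sum_sum_sq fun r b =>
        hasDerivAt_weightedGradU_gaugeLine (c bt) W U A hℓ r b)).const_mul (q bt)).const_mul (η / 4)
  have hlocal : IsLocalMin (fun t => F (gaugeLine W U A t)) 0 := by
    rw [← gaugeLine_zero W U A] at hmin
    exact hmin.comp_continuous
      ((hasDerivAt_gaugeLine_fst W U A 0).prodMk (hasDerivAt_gaugeLine_snd W U A 0)).continuousAt
  have h0 := hlocal.hasDerivAt_eq_zero (((hloss.fun_add hreg).fun_add hpen).congr_of_eventuallyEq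
    (Filter.Eventually.of_forall fun t => hF (gaugeLine W U A t).1 (gaugeLine W U A t).2))
  simp only [gaugeLine_zero, mul_zero, Finset.sum_const_zero, zero_add, Pi.neg_apply, mul_add,
    mul_sub, mul_neg, Finset.sum_add_distrib, Finset.sum_sub_distrib, Finset.sum_neg_distrib,
    mul_left_comm _ (2 : ℝ), ← Finset.mul_sum] at h0 ⊢
  linear_combination 2 * h0

end Stationarity

lemma sum_single_apply_mul_row {ι κ : Type*} [Fintype κ] [DecidableEq ι] [DecidableEq κ]
    (s r : ι) (t : κ) (v : κ → ℝ) :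
    ∑ j, (Pi.single s (Pi.single t 1) : ι → κ → ℝ) r j * v j = if r = s then v t else 0 := by
  by_cases h : r = s <;> simp [h, Pi.single_apply]

lemma sum_single_apply_mul_col {ι κ : Type*} [Fintype ι] [DecidableEq ι] [DecidableEq κ]
    (s : ι) (t r : κ) (v : ι → ℝ) :
    ∑ j, (Pi.single s (Pi.single t 1) : ι → κ → ℝ) j r * v j = if r = t then v s else 0 := by
  by_cases h : r = t <;> simp [h, Pi.single_apply, ite_apply, ite_mul]

lemma matmulF_single_single_apply {m k : ℕ} (W : Fin m → Fin k → ℝ) (s t : Fin k) (a : Fin m)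
    (r : Fin k) : matmulF W (Pi.single s (Pi.single t 1)) a r = if r = t then W a s else 0 := by
  simp only [matmulF, mul_comm (W a _), sum_single_apply_mul_col]

lemma single_single_matmulF_apply {k n : ℕ} (U : Fin k → Fin n → ℝ) (s t : Fin k) (r : Fin k)
    (b : Fin n) : matmulF (Pi.single s (Pi.single t 1)) U r b = if r = s then U t b else 0 :=
  sum_single_apply_mul_row s r t (U · b)

theorem stmt10_general {m k n : ℕ} {X B : Type} [Fintype X] [Fintype B]
    (p : X → ℝ)
    (q : B → ℝ)
    (c : B → X → ℝ)
    (ℓ : X → (Fin m → Fin n → ℝ) → ℝ) (hℓ : ∀ x, ContDiff ℝ 2 (ℓ x))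
    (η γ : ℝ)
    (F : (Fin m → Fin k → ℝ) × (Fin k → Fin n → ℝ) → ℝ)
    (hF : ∀ W U, F (W, U) = (∑ x, p x * ℓ x (matmulF W U))
      + γ * ((∑ a, ∑ b, (W a b) ^ 2) + (∑ a, ∑ b, (U a b) ^ 2))
      + (η / 4) * ∑ bt, q bt *
          ((∑ a, ∑ b, (∑ x, c bt x * gradW ℓ x W U a b) ^ 2)
            + (∑ a, ∑ b, (∑ x, c bt x * gradU ℓ x W U a b) ^ 2)))
    (W : Fin m → Fin k → ℝ) (U : Fin k → Fin n → ℝ)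
    (hmin : IsLocalMin F (W, U)) :
    η • (∑ bt, q bt •
        ((Matrix.of (fun a b => ∑ x, c bt x * gradW ℓ x W U a b))ᵀ *
            (Matrix.of (fun a b => ∑ x, c bt x * gradW ℓ x W U a b))
          - (Matrix.of (fun a b => ∑ x, c bt x * gradU ℓ x W U a b)) *
            (Matrix.of (fun a b => ∑ x, c bt x * gradU ℓ x W U a b))ᵀ))
      = (4 * γ) • ((Matrix.of W)ᵀ * Matrix.of W - Matrix.of U * (Matrix.of U)ᵀ) := by
  ext s t
  have h := alignment_pairing_of_isLocalMin W U (Pi.single s (Pi.single t 1)) hℓ hF hmin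
  simp only [Matrix.smul_apply, Matrix.sum_apply, Matrix.sub_apply, Matrix.mul_apply,
    Matrix.transpose_apply, Matrix.of_apply, smul_eq_mul]
  simp only [matmulF_single_single_apply, single_single_matmulF_apply, sum_single_apply_mul_row,
    sum_single_apply_mul_col, mul_ite, mul_zero, Finset.sum_ite_irrel, Finset.sum_const_zero,
    Finset.sum_ite_eq', Finset.mem_univ, if_true, weightedGradW, weightedGradU] at h
  simpa only [mul_comm] using h

/-- (Gradient alignment for factored layers.)  If the loss depends on `(W,U)` only through
`WU`, then at any local minimum of the entropic loss `F`,
`η E[G_Wᵀ G_W − G_U G_Uᵀ] = 4γ (WᵀW − UUᵀ)`. -/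
theorem stmt10 {m k n : ℕ} {X B : Type} [Fintype X] [Fintype B]
    (p : X → ℝ) (hp : ∀ x, 0 ≤ p x) (hp1 : ∑ x, p x = 1)
    (q : B → ℝ) (hq : ∀ b, 0 ≤ q b) (hq1 : ∑ b, q b = 1)
    (c : B → X → ℝ) (hc : ∀ b x, 0 ≤ c b x) (hc1 : ∀ b, ∑ x, c b x = 1)
    (ℓ : X → (Fin m → Fin n → ℝ) → ℝ) (hℓ : ∀ x, ContDiff ℝ 2 (ℓ x))
    (η γ : ℝ)
    (F : (Fin m → Fin k → ℝ) × (Fin k → Fin n → ℝ) → ℝ)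
    (hF : ∀ W U, F (W, U) = (∑ x, p x * ℓ x (matmulF W U))
      + γ * ((∑ a, ∑ b, (W a b) ^ 2) + (∑ a, ∑ b, (U a b) ^ 2))
      + (η / 4) * ∑ bt, q bt *
          ((∑ a, ∑ b, (∑ x, c bt x * gradW ℓ x W U a b) ^ 2)
            + (∑ a, ∑ b, (∑ x, c bt x * gradU ℓ x W U a b) ^ 2)))
    (W : Fin m → Fin k → ℝ) (U : Fin k → Fin n → ℝ)
    (hmin : IsLocalMin F (W, U)) :
    η • (∑ bt, q bt •
        ((Matrix.of (fun a b => ∑ x, c bt x * gradW ℓ x W U a b))ᵀ *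
            (Matrix.of (fun a b => ∑ x, c bt x * gradW ℓ x W U a b))
          - (Matrix.of (fun a b => ∑ x, c bt x * gradU ℓ x W U a b)) *
            (Matrix.of (fun a b => ∑ x, c bt x * gradU ℓ x W U a b))ᵀ))
      = (4 * γ) • ((Matrix.of W)ᵀ * Matrix.of W - Matrix.of U * (Matrix.of U)ᵀ) :=
  stmt10_general p q c ℓ hℓ η γ F hF W U hmin
end

section
/- If ℓ(x, W, U) = ℓ̃(x, WU) and (W, U) is a local minimum of the entropic loss with γ = 0, then E[G_Wᵀ G_W] = E[G_U G_Uᵀ]; with η = 0 and γ > 0 instead, WᵀW = U Uᵀ, so weights of the two factors are balanced. -/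
/-!
The loss `ℓ̃(x, W U)` is invariant under `(W, U) ↦ (W A, A⁻¹ U)`, so its gradients transform as
`G_W ↦ G_W A⁻ᵀ` and `G_U ↦ Aᵀ G_U`. Along the curve `A = 1 + t E` with `E` an elementary matrix
(whose inverse is `1 - t / (1 + t d) • E` when `E² = d E`) the data term is constant, and the
derivative at `t = 0` of the regularizer plus the gradient penalty is `2 tr (M E)` with
`M = γ (WᵀW - UUᵀ) + (η / 4) E_B [G_U G_Uᵀ - G_Wᵀ G_W]`. At a local minimum this vanishes for
every elementary `E`, so `M = 0`; taking `γ = 0` or `η = 0` gives the two balance laws.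
-/

open Matrix Finset

open Topology

theorem fderiv_apply_eq_of_invariant {𝕜 E G : Type*} [NontriviallyNormedField 𝕜]
    [NormedAddCommGroup E] [NormedSpace 𝕜 E] [NormedAddCommGroup G] [NormedSpace 𝕜 G]
    {φ : E → G} (L : E ≃L[𝕜] E) (hφ : ∀ p, φ (L p) = φ p) (p v : E) :
    fderiv 𝕜 φ (L p) v = fderiv 𝕜 φ p (L.symm v) := by
  have hφ' : φ = φ ∘ L.symm := funext fun p' => by simpa using hφ (L.symm p')
  conv_lhs => rw [hφ', L.symm.comp_right_fderiv]
  simp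

theorem LinearMap.apply_eq_sum_sum_single {R M ι κ : Type*} [CommSemiring R] [AddCommMonoid M]
    [Module R M] [Fintype ι] [Fintype κ] [DecidableEq ι] [DecidableEq κ]
    (f : (ι → κ → R) →ₗ[R] M) (V : ι → κ → R) :
    f V = ∑ a, ∑ b, V a b • f (Pi.single a (Pi.single b 1)) := by
  have hV : V = ∑ a, ∑ b, V a b • Pi.single a (Pi.single b 1) := by
    ext a b
    simp [Finset.sum_apply, Pi.single_apply, ite_apply]
  conv_lhs => rw [hV]
  simp only [map_sum, map_smul]

section Reparam

variable {m k n : ℕ} {X : Type} (ℓ : X → (Fin m → Fin n → ℝ) → ℝ) (x : X)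

theorem fderiv_apply_inl_eq_sum_mul_gradW (W V : Fin m → Fin k → ℝ) (U : Fin k → Fin n → ℝ) :
    fderiv ℝ (fun p : (Fin m → Fin k → ℝ) × (Fin k → Fin n → ℝ) => ℓ x (matmulF p.1 p.2))
      (W, U) (V, 0) = ∑ a, ∑ b, V a b * gradW ℓ x W U a b :=
  (((fderiv ℝ _ (W, U)).toLinearMap.comp (LinearMap.inl ℝ _ _))).apply_eq_sum_sum_single V

theorem fderiv_apply_inr_eq_sum_mul_gradU (W : Fin m → Fin k → ℝ) (U V : Fin k → Fin n → ℝ) :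
    fderiv ℝ (fun p : (Fin m → Fin k → ℝ) × (Fin k → Fin n → ℝ) => ℓ x (matmulF p.1 p.2))
      (W, U) (0, V) = ∑ a, ∑ b, V a b * gradU ℓ x W U a b :=
  (((fderiv ℝ _ (W, U)).toLinearMap.comp (LinearMap.inr ℝ _ _))).apply_eq_sum_sum_single V

variable {ℓ x}

-- The factors are returned through `of.symm` because `gradW` and `gradU` differentiate on the
-- function spaces: `Matrix` carries no norm.
def mulFactors (A B : Matrix (Fin k) (Fin k) ℝ) (p : (Fin m → Fin k → ℝ) × (Fin k → Fin n → ℝ)) :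
    (Fin m → Fin k → ℝ) × (Fin k → Fin n → ℝ) :=
  (of.symm (of p.1 * A), of.symm (B * of p.2))

theorem mulFactors_mulFactors (A B A' B' : Matrix (Fin k) (Fin k) ℝ)
    (p : (Fin m → Fin k → ℝ) × (Fin k → Fin n → ℝ)) :
    mulFactors A' B' (mulFactors A B p) = mulFactors (A * A') (B' * B) p := by
  simp [mulFactors, Matrix.mul_assoc]

theorem mulFactors_one (p : (Fin m → Fin k → ℝ) × (Fin k → Fin n → ℝ)) :
    mulFactors 1 1 p = p := by
  simp [mulFactors]

theorem matmulF_mulFactors {A B : Matrix (Fin k) (Fin k) ℝ} (hAB : A * B = 1)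
    (W : Fin m → Fin k → ℝ) (U : Fin k → Fin n → ℝ) :
    matmulF (of.symm (of W * A)) (of.symm (B * of U)) = matmulF W U := by
  change of W * A * (B * of U) = of W * of U
  rw [Matrix.mul_assoc, ← Matrix.mul_assoc A, hAB, Matrix.one_mul]

noncomputable def mulFactorsEquiv {A B : Matrix (Fin k) (Fin k) ℝ} (hAB : A * B = 1) :
    ((Fin m → Fin k → ℝ) × (Fin k → Fin n → ℝ)) ≃L[ℝ]
      ((Fin m → Fin k → ℝ) × (Fin k → Fin n → ℝ)) :=
  have hBA : B * A = 1 := mul_eq_one_comm.mp hAB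
  LinearEquiv.toContinuousLinearEquiv
    { toFun := mulFactors A B
      invFun := mulFactors B A
      map_add' := fun p p' => Prod.ext (congrArg of.symm (Matrix.add_mul (of p.1) (of p'.1) A))
        (congrArg of.symm (Matrix.mul_add B (of p.2) (of p'.2)))
      map_smul' := fun r p => Prod.ext (congrArg of.symm (Matrix.smul_mul r (of p.1) A))
        (congrArg of.symm (Matrix.mul_smul B r (of p.2)))
      left_inv := fun p => by rw [mulFactors_mulFactors, hAB, mulFactors_one]
      right_inv := fun p => by rw [mulFactors_mulFactors, hBA, mulFactors_one] }

theorem gradW_mulFactors {A B : Matrix (Fin k) (Fin k) ℝ} (hAB : A * B = 1)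
    (W : Fin m → Fin k → ℝ) (U : Fin k → Fin n → ℝ) :
    of (gradW ℓ x (of.symm (of W * A)) (of.symm (B * of U))) = of (gradW ℓ x W U) * Bᵀ := by
  ext a b
  refine (fderiv_apply_eq_of_invariant (mulFactorsEquiv hAB)
    (fun p => congrArg (ℓ x) (matmulF_mulFactors hAB p.1 p.2)) (W, U)
    (Pi.single a (Pi.single b 1), 0)).trans ?_
  have hv : (mulFactorsEquiv (n := n) hAB).symm (Pi.single a (Pi.single b 1), 0)
      = (matmulF (Pi.single a (Pi.single b 1)) B, 0) := Prod.ext rfl (Matrix.mul_zero A)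
  rw [hv, fderiv_apply_inl_eq_sum_mul_gradW]
  simp [matmulF, Matrix.mul_apply, Pi.single_apply, ite_apply, mul_comm]

theorem gradU_mulFactors {A B : Matrix (Fin k) (Fin k) ℝ} (hAB : A * B = 1)
    (W : Fin m → Fin k → ℝ) (U : Fin k → Fin n → ℝ) :
    of (gradU ℓ x (of.symm (of W * A)) (of.symm (B * of U))) = Aᵀ * of (gradU ℓ x W U) := by
  ext a b
  refine (fderiv_apply_eq_of_invariant (mulFactorsEquiv hAB)
    (fun p => congrArg (ℓ x) (matmulF_mulFactors hAB p.1 p.2)) (W, U)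
    (0, Pi.single a (Pi.single b 1))).trans ?_
  have hv : (mulFactorsEquiv (m := m) hAB).symm (0, Pi.single a (Pi.single b 1))
      = (0, matmulF A (Pi.single a (Pi.single b 1))) := Prod.ext (Matrix.zero_mul B) rfl
  rw [hv, fderiv_apply_inr_eq_sum_mul_gradU]
  simp [matmulF, Matrix.mul_apply, Pi.single_apply, ite_apply]

end Reparam

section Batch

variable {m k n : ℕ} {X : Type} [Fintype X] (ℓ : X → (Fin m → Fin n → ℝ) → ℝ) (w : X → ℝ)

noncomputable def batchGradW (W : Fin m → Fin k → ℝ) (U : Fin k → Fin n → ℝ) :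
    Matrix (Fin m) (Fin k) ℝ :=
  of fun a b => ∑ x, w x * gradW ℓ x W U a b

noncomputable def batchGradU (W : Fin m → Fin k → ℝ) (U : Fin k → Fin n → ℝ) :
    Matrix (Fin k) (Fin n) ℝ :=
  of fun a b => ∑ x, w x * gradU ℓ x W U a b

theorem batchGradW_eq_sum (W : Fin m → Fin k → ℝ) (U : Fin k → Fin n → ℝ) :
    batchGradW ℓ w W U = ∑ x, w x • of (gradW ℓ x W U) := by
  ext a b
  simp [batchGradW, Matrix.sum_apply]

theorem batchGradU_eq_sum (W : Fin m → Fin k → ℝ) (U : Fin k → Fin n → ℝ) :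
    batchGradU ℓ w W U = ∑ x, w x • of (gradU ℓ x W U) := by
  ext a b
  simp [batchGradU, Matrix.sum_apply]

theorem batchGradW_mulFactors {A B : Matrix (Fin k) (Fin k) ℝ} (hAB : A * B = 1)
    (W : Fin m → Fin k → ℝ) (U : Fin k → Fin n → ℝ) :
    batchGradW ℓ w (of.symm (of W * A)) (of.symm (B * of U)) = batchGradW ℓ w W U * Bᵀ := by
  simp only [batchGradW_eq_sum, gradW_mulFactors hAB, Matrix.sum_mul, Matrix.smul_mul]

theorem batchGradU_mulFactors {A B : Matrix (Fin k) (Fin k) ℝ} (hAB : A * B = 1)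
    (W : Fin m → Fin k → ℝ) (U : Fin k → Fin n → ℝ) :
    batchGradU ℓ w (of.symm (of W * A)) (of.symm (B * of U)) = Aᵀ * batchGradU ℓ w W U := by
  simp only [batchGradU_eq_sum, gradU_mulFactors hAB, Matrix.mul_sum, Matrix.mul_smul]

end Batch

section FrobeniusSq

variable {α β ι : Type*} [Fintype α] [Fintype β] [Fintype ι]

def frobSq (M : Matrix α β ℝ) : ℝ := ∑ a, ∑ b, M a b ^ 2

theorem frobSq_transpose (M : Matrix α β ℝ) : frobSq Mᵀ = frobSq M :=
  Finset.sum_comm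

theorem hasDerivAt_frobSq_add_smul (X Y : Matrix α β ℝ) {f : ℝ → ℝ} {f' t : ℝ}
    (hf : HasDerivAt f f' t) :
    HasDerivAt (fun s => frobSq (X + f s • Y))
      (2 * f' * ∑ a, ∑ b, (X + f t • Y) a b * Y a b) t := by
  simp only [frobSq, Finset.mul_sum]
  refine HasDerivAt.fun_sum fun a _ => HasDerivAt.fun_sum fun b _ => ?_
  refine (((hf.mul_const (Y a b)).const_add (X a b)).fun_pow 2).congr_deriv ?_
  simp only [Matrix.add_apply, Matrix.smul_apply, smul_eq_mul]
  ring

theorem sum_apply_mul_mul_apply_right (P : Matrix α ι ℝ) (E : Matrix ι ι ℝ) :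
    ∑ a, ∑ b, P a b * (P * E) a b = trace (Pᵀ * P * E) := by
  rw [Matrix.mul_assoc, Finset.sum_comm]
  simp only [Matrix.trace, Matrix.diag, Matrix.mul_apply (M := Pᵀ), Matrix.transpose_apply]

theorem sum_apply_mul_mul_apply_left (E : Matrix ι ι ℝ) (Q : Matrix ι β ℝ) :
    ∑ a, ∑ b, Q a b * (E * Q) a b = trace (Q * Qᵀ * E) := by
  rw [Matrix.trace_mul_cycle]
  simp only [Matrix.trace, Matrix.diag, Matrix.mul_apply (M := E * Q), Matrix.transpose_apply,
    mul_comm]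

end FrobeniusSq

section Shear

variable {α β ι : Type*} [Fintype α] [Fintype β] [Fintype ι] [DecidableEq ι]

def shear (E : Matrix ι ι ℝ) (t : ℝ) : Matrix ι ι ℝ := 1 + t • E

noncomputable def shearInv (E : Matrix ι ι ℝ) (d t : ℝ) : Matrix ι ι ℝ := 1 - (t / (1 + t * d)) • E

theorem shear_mul_shearInv {E : Matrix ι ι ℝ} {d t : ℝ} (hE : E * E = d • E)
    (ht : 1 + t * d ≠ 0) : shear E t * shearInv E d t = 1 := by
  have hs : t / (1 + t * d) * (1 + t * d) = t := div_mul_cancel₀ t ht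
  simp only [shear, shearInv, Matrix.add_mul, Matrix.mul_sub, Matrix.one_mul, Matrix.mul_one,
    Matrix.smul_mul, Matrix.mul_smul, hE, smul_smul]
  linear_combination (norm := module) (-hs) • E

theorem single_mul_single_self (i j : ι) :
    single i j (1 : ℝ) * single i j 1 = (if j = i then 1 else 0 : ℝ) • single i j 1 := by
  by_cases h : j = i
  · subst h; simp
  · simp [h, single_mul_single_of_ne]

theorem hasDerivAt_div_one_add_mul (d : ℝ) : HasDerivAt (fun t : ℝ => t / (1 + t * d)) 1 0 := by
  have h := (hasDerivAt_id' (0 : ℝ)).fun_div (((hasDerivAt_id' (0 : ℝ)).mul_const d).const_add 1)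
    (by simp)
  simpa using h

theorem hasDerivAt_frobSq_shear (P : Matrix α ι ℝ) (Q : Matrix ι β ℝ) (E : Matrix ι ι ℝ) (d : ℝ) :
    HasDerivAt (fun t => frobSq (P * shear E t) + frobSq (shearInv E d t * Q))
      (2 * trace ((Pᵀ * P - Q * Qᵀ) * E)) 0 := by
  have hP : ∀ t : ℝ, P * shear E t = P + t • (P * E) := fun t => by
    rw [shear, Matrix.mul_add, Matrix.mul_one, Matrix.mul_smul]
  have hQ : ∀ t : ℝ, shearInv E d t * Q = Q + (-(t / (1 + t * d))) • (E * Q) := fun t => by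
    rw [shearInv, Matrix.sub_mul, Matrix.one_mul, Matrix.smul_mul, sub_eq_add_neg, neg_smul]
  simp only [hP, hQ]
  refine ((hasDerivAt_frobSq_add_smul P (P * E) (hasDerivAt_id' 0)).fun_add
    (hasDerivAt_frobSq_add_smul Q (E * Q) (hasDerivAt_div_one_add_mul d).fun_neg)).congr_deriv ?_
  simp [sum_apply_mul_mul_apply_right, sum_apply_mul_mul_apply_left, Matrix.sub_mul, trace_sub]
  ring

end Shear

theorem continuousAt_mulFactors_shear {m k n : ℕ} (E : Matrix (Fin k) (Fin k) ℝ) (d : ℝ)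
    (p : (Fin m → Fin k → ℝ) × (Fin k → Fin n → ℝ)) :
    ContinuousAt (fun t => mulFactors (shear E t) (shearInv E d t) p) 0 := by
  have hs : ContinuousAt (fun t : ℝ => t / (1 + t * d)) 0 :=
    continuousAt_id.div (by fun_prop) (by simp)
  have hW : ContinuousAt (fun t : ℝ => of p.1 * shear E t) 0 := by unfold shear; fun_prop
  have hU : ContinuousAt (fun t : ℝ => shearInv E d t * of p.2) 0 := by unfold shearInv; fun_prop
  exact hW.prodMk hU

section EntropicLoss

variable {m k n : ℕ} {X ι : Type} [Fintype X] [Fintype ι]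
  (p : X → ℝ) (q : ι → ℝ) (c : ι → X → ℝ) (ℓ : X → (Fin m → Fin n → ℝ) → ℝ)

noncomputable def entropicLoss (η γ : ℝ) (P : (Fin m → Fin k → ℝ) × (Fin k → Fin n → ℝ)) : ℝ :=
  (∑ x, p x * ℓ x (matmulF P.1 P.2)) + γ * (frobSq (of P.1) + frobSq (of P.2))
    + (η / 4) * ∑ bt, q bt *
        (frobSq (batchGradW ℓ (c bt) P.1 P.2) + frobSq (batchGradU ℓ (c bt) P.1 P.2))

theorem entropicLoss_mulFactors {A B : Matrix (Fin k) (Fin k) ℝ} (hAB : A * B = 1) (η γ : ℝ)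
    (W : Fin m → Fin k → ℝ) (U : Fin k → Fin n → ℝ) :
    entropicLoss p q c ℓ η γ (mulFactors A B (W, U))
      = (∑ x, p x * ℓ x (matmulF W U)) + γ * (frobSq (of W * A) + frobSq (B * of U))
        + (η / 4) * ∑ bt, q bt * (frobSq ((batchGradU ℓ (c bt) W U)ᵀ * A)
          + frobSq (B * (batchGradW ℓ (c bt) W U)ᵀ)) := by
  have hsym : ∀ (G : Matrix (Fin m) (Fin k) ℝ) (H : Matrix (Fin k) (Fin n) ℝ),
      frobSq (G * Bᵀ) + frobSq (Aᵀ * H) = frobSq (Hᵀ * A) + frobSq (B * Gᵀ) := fun G H => by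
    rw [add_comm, ← frobSq_transpose (Aᵀ * H), ← frobSq_transpose (G * Bᵀ), Matrix.transpose_mul,
      Matrix.transpose_mul, Matrix.transpose_transpose, Matrix.transpose_transpose]
  simp only [entropicLoss, mulFactors, matmulF_mulFactors hAB, batchGradW_mulFactors _ _ hAB,
    batchGradU_mulFactors _ _ hAB, hsym]
  rfl

theorem hasDerivAt_entropicLoss_shear {E : Matrix (Fin k) (Fin k) ℝ} {d : ℝ} (hE : E * E = d • E)
    (η γ : ℝ) (W : Fin m → Fin k → ℝ) (U : Fin k → Fin n → ℝ) :
    HasDerivAt (fun t => entropicLoss p q c ℓ η γ (mulFactors (shear E t) (shearInv E d t) (W, U)))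
      (γ * (2 * trace (((of W)ᵀ * of W - of U * (of U)ᵀ) * E))
        + (η / 4) * ∑ bt, q bt * (2 * trace ((batchGradU ℓ (c bt) W U * (batchGradU ℓ (c bt) W U)ᵀ
          - (batchGradW ℓ (c bt) W U)ᵀ * batchGradW ℓ (c bt) W U) * E))) 0 := by
  have hinv : ∀ᶠ t in 𝓝 (0 : ℝ), 1 + t * d ≠ 0 :=
    (continuous_const.add (continuous_id.mul continuous_const)).continuousAt.eventually_ne
      (by simp)
  refine HasDerivAt.congr_of_eventuallyEq ?_
    (hinv.mono fun t ht => entropicLoss_mulFactors p q c ℓ (shear_mul_shearInv hE ht) η γ W U)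
  refine (((hasDerivAt_frobSq_shear (of W) (of U) E d).const_mul γ).const_add _).fun_add
    ((HasDerivAt.fun_sum fun bt _ => ?_).const_mul (η / 4))
  have h := (hasDerivAt_frobSq_shear (batchGradU ℓ (c bt) W U)ᵀ (batchGradW ℓ (c bt) W U)ᵀ E d)
  rw [Matrix.transpose_transpose, Matrix.transpose_transpose] at h
  exact h.const_mul (q bt)

theorem entropicLoss_balance_of_isLocalMin {η γ : ℝ} {W : Fin m → Fin k → ℝ}
    {U : Fin k → Fin n → ℝ} (hmin : IsLocalMin (entropicLoss p q c ℓ η γ) (W, U)) :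
    γ • ((of W)ᵀ * of W - of U * (of U)ᵀ) + (η / 4) • ∑ bt, q bt •
      (batchGradU ℓ (c bt) W U * (batchGradU ℓ (c bt) W U)ᵀ
        - (batchGradW ℓ (c bt) W U)ᵀ * batchGradW ℓ (c bt) W U) = 0 := by
  ext i j
  set E : Matrix (Fin k) (Fin k) ℝ := single j i 1
  set d : ℝ := if i = j then 1 else 0
  have hstart : mulFactors (shear E 0) (shearInv E d 0) (W, U) = (W, U) := by
    simp [shear, shearInv, mulFactors_one]
  rw [← hstart] at hmin
  have h0 := IsLocalMin.hasDerivAt_eq_zero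
    (hmin.comp_continuous (g := fun t => mulFactors (shear E t) (shearInv E d t) (W, U))
      (continuousAt_mulFactors_shear E d (W, U)))
    (hasDerivAt_entropicLoss_shear p q c ℓ (single_mul_single_self j i) η γ W U)
  simp only [trace_mul_single, MulOpposite.op_one, one_smul] at h0
  simp only [mul_left_comm _ (2 : ℝ), ← Finset.mul_sum] at h0
  simp only [Matrix.add_apply, Matrix.smul_apply, Matrix.sum_apply, smul_eq_mul,
    Matrix.zero_apply]
  linarith

end EntropicLoss

theorem stmt11_general {m k n : ℕ} {X B : Type} [Fintype X] [Fintype B]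
    (p : X → ℝ) (q : B → ℝ) (c : B → X → ℝ)
    (ℓ : X → (Fin m → Fin n → ℝ) → ℝ)
    (F : ℝ → ℝ → (Fin m → Fin k → ℝ) × (Fin k → Fin n → ℝ) → ℝ)
    (hF : ∀ η γ W U, F η γ (W, U) = (∑ x, p x * ℓ x (matmulF W U))
      + γ * ((∑ a, ∑ b, (W a b) ^ 2) + (∑ a, ∑ b, (U a b) ^ 2))
      + (η / 4) * ∑ bt, q bt *
          ((∑ a, ∑ b, (∑ x, c bt x * gradW ℓ x W U a b) ^ 2)
            + (∑ a, ∑ b, (∑ x, c bt x * gradU ℓ x W U a b) ^ 2)))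
    (W : Fin m → Fin k → ℝ) (U : Fin k → Fin n → ℝ) :
    (∀ η : ℝ, 0 < η → IsLocalMin (F η 0) (W, U) →
      (∑ bt, q bt •
          ((Matrix.of (fun a b => ∑ x, c bt x * gradW ℓ x W U a b))ᵀ *
              (Matrix.of (fun a b => ∑ x, c bt x * gradW ℓ x W U a b))))
        = ∑ bt, q bt •
            ((Matrix.of (fun a b => ∑ x, c bt x * gradU ℓ x W U a b)) *
              (Matrix.of (fun a b => ∑ x, c bt x * gradU ℓ x W U a b))ᵀ)) ∧
    (∀ γ : ℝ, 0 < γ → IsLocalMin (F 0 γ) (W, U) →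
      (Matrix.of W)ᵀ * Matrix.of W = Matrix.of U * (Matrix.of U)ᵀ) := by
  obtain rfl : F = entropicLoss p q c ℓ :=
    funext fun η => funext fun γ => funext fun P => hF η γ P.1 P.2
  refine ⟨fun η hη hmin => ?_, fun γ hγ hmin => ?_⟩
  · have h := entropicLoss_balance_of_isLocalMin p q c ℓ hmin
    rw [zero_smul, zero_add, smul_eq_zero, or_iff_right (by positivity)] at h
    simp only [smul_sub, Finset.sum_sub_distrib, sub_eq_zero] at h
    exact h.symm
  · have h := entropicLoss_balance_of_isLocalMin p q c ℓ hmin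
    rw [zero_div, zero_smul, add_zero, smul_eq_zero, or_iff_right hγ.ne', sub_eq_zero] at h
    exact h

/-- If `ℓ(x, W, U) = ℓ̃(x, WU)` and `(W,U)` is a local minimum of the entropic loss with
`γ = 0` (and `η > 0`), then `E[G_Wᵀ G_W] = E[G_U G_Uᵀ]` (gradient balance); if instead
`η = 0` and `γ > 0`, then `WᵀW = UUᵀ` (weight balance). -/
theorem stmt11 {m k n : ℕ} {X B : Type} [Fintype X] [Fintype B]
    (p : X → ℝ) (hp : ∀ x, 0 ≤ p x) (hp1 : ∑ x, p x = 1)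
    (q : B → ℝ) (hq : ∀ b, 0 ≤ q b) (hq1 : ∑ b, q b = 1)
    (c : B → X → ℝ) (hc : ∀ b x, 0 ≤ c b x) (hc1 : ∀ b, ∑ x, c b x = 1)
    (ℓ : X → (Fin m → Fin n → ℝ) → ℝ) (hℓ : ∀ x, ContDiff ℝ 2 (ℓ x))
    (F : ℝ → ℝ → (Fin m → Fin k → ℝ) × (Fin k → Fin n → ℝ) → ℝ)
    (hF : ∀ η γ W U, F η γ (W, U) = (∑ x, p x * ℓ x (matmulF W U))
      + γ * ((∑ a, ∑ b, (W a b) ^ 2) + (∑ a, ∑ b, (U a b) ^ 2))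
      + (η / 4) * ∑ bt, q bt *
          ((∑ a, ∑ b, (∑ x, c bt x * gradW ℓ x W U a b) ^ 2)
            + (∑ a, ∑ b, (∑ x, c bt x * gradU ℓ x W U a b) ^ 2)))
    (W : Fin m → Fin k → ℝ) (U : Fin k → Fin n → ℝ) :
    (∀ η : ℝ, 0 < η → IsLocalMin (F η 0) (W, U) →
      (∑ bt, q bt •
          ((Matrix.of (fun a b => ∑ x, c bt x * gradW ℓ x W U a b))ᵀ *
              (Matrix.of (fun a b => ∑ x, c bt x * gradW ℓ x W U a b))))
        = ∑ bt, q bt •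
            ((Matrix.of (fun a b => ∑ x, c bt x * gradU ℓ x W U a b)) *
              (Matrix.of (fun a b => ∑ x, c bt x * gradU ℓ x W U a b))ᵀ)) ∧
    (∀ γ : ℝ, 0 < γ → IsLocalMin (F 0 γ) (W, U) →
      (Matrix.of W)ᵀ * Matrix.of W = Matrix.of U * (Matrix.of U)ᵀ) :=
  stmt11_general p q c ℓ F hF W U
end

section
/- (Polynomial network neuron imbalance) In a network with activation h ↦ h^d, the loss is invariant under w_{i,j,:} ↦ e^λ w_{i,j,:}, w_{i+1,:,j} ↦ e^{−dλ} w_{i+1,:,j}. Hence at any local minimum of the entropic loss with γ = 0, E Tr[g_{i,j,:} g_{i,j,:}ᵀ] = d · E Tr[g_{i+1,:,j} g_{i+1,:,j}ᵀ]: the incoming-gradient second moment of each neuron equals d times the outgoing one. -/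
open Finset

/-- Parameters split into a neuron's incoming weights, its outgoing weights, and the rest. -/
abbrev Params (P Q s : ℕ) := (Fin P → ℝ) × (Fin Q → ℝ) × (Fin s → ℝ)

/-- Gradient with respect to the incoming weights of the neuron. -/
noncomputable def gIn {P Q s : ℕ} (f : Params P Q s → ℝ) (θ : Params P Q s) :
    Fin P → ℝ :=
  fun i => fderiv ℝ f θ (Pi.single i 1, 0, 0)

/-- Gradient with respect to the outgoing weights of the neuron. -/
noncomputable def gOut {P Q s : ℕ} (f : Params P Q s → ℝ) (θ : Params P Q s) :
    Fin Q → ℝ :=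
  fun i => fderiv ℝ f θ (0, Pi.single i 1, 0)

/-- Gradient with respect to the remaining parameters. -/
noncomputable def gRest {P Q s : ℕ} (f : Params P Q s → ℝ) (θ : Params P Q s) :
    Fin s → ℝ :=
  fun i => fderiv ℝ f θ (0, 0, Pi.single i 1)

/-!
Rescaling a neuron's incoming weights by `e^t` and its outgoing weights by `e^{-dt}` leaves
every per-sample loss unchanged, so by the chain rule the incoming gradients scale by `e^{-t}`
and the outgoing ones by `e^{dt}`. Along this orbit through `θ*` the entropic loss is
`K + (η/4) (e^{-2t} A + e^{2dt} B + C)`, with `A`, `B` the incoming and outgoing gradient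
second moments; its derivative `(η/4)(2dB - 2A)` vanishes at the local minimum `t = 0`.
-/

noncomputable def neuronRescale (P Q s : ℕ) (d t : ℝ) : Params P Q s →L[ℝ] Params P Q s :=
  (Real.exp t • ContinuousLinearMap.id ℝ (Fin P → ℝ)).prodMap
    ((Real.exp (-(d * t)) • ContinuousLinearMap.id ℝ (Fin Q → ℝ)).prodMap
      (ContinuousLinearMap.id ℝ (Fin s → ℝ)))

lemma neuronRescale_apply {P Q s : ℕ} (d t : ℝ) (θ : Params P Q s) :
    neuronRescale P Q s d t θ = (Real.exp t • θ.1, Real.exp (-(d * t)) • θ.2.1, θ.2.2) := rfl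

@[simp]
lemma neuronRescale_zero {P Q s : ℕ} (d : ℝ) (θ : Params P Q s) :
    neuronRescale P Q s d 0 θ = θ := by
  simp [neuronRescale_apply]

lemma continuous_neuronRescale_apply {P Q s : ℕ} (d : ℝ) (θ : Params P Q s) :
    Continuous fun t => neuronRescale P Q s d t θ := by
  simp only [neuronRescale_apply]
  fun_prop

lemma fderiv_map_apply_map_of_comp_eq {𝕜 E F : Type*} [NontriviallyNormedField 𝕜]
    [NormedAddCommGroup E] [NormedSpace 𝕜 E] [NormedAddCommGroup F] [NormedSpace 𝕜 F]
    {f : E → F} (L : E →L[𝕜] E) (hf : Differentiable 𝕜 f) (hinv : f ∘ L = f) (θ v : E) :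
    fderiv 𝕜 f (L θ) (L v) = fderiv 𝕜 f θ v := by
  conv_rhs => rw [← hinv, fderiv_comp θ (hf _) L.differentiableAt, L.fderiv]
  rfl

section Rescale

variable {P Q s : ℕ} {d t : ℝ} {f : Params P Q s → ℝ}

lemma gIn_neuronRescale (hf : Differentiable ℝ f) (hinv : f ∘ neuronRescale P Q s d t = f)
    (θ : Params P Q s) :
    gIn f (neuronRescale P Q s d t θ) = Real.exp (-t) • gIn f θ := by
  funext i
  have h := fderiv_map_apply_map_of_comp_eq _ hf hinv θ (Pi.single i 1, 0, 0)
  have hv : neuronRescale P Q s d t (Pi.single i 1, 0, 0)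
      = Real.exp t • ((Pi.single i 1 : Fin P → ℝ), (0 : Fin Q → ℝ), (0 : Fin s → ℝ)) := by
    simp [neuronRescale_apply]
  rw [hv, map_smul, smul_eq_mul] at h
  simp only [gIn, Pi.smul_apply, smul_eq_mul, ← h, Real.exp_neg]
  field_simp

lemma gOut_neuronRescale (hf : Differentiable ℝ f) (hinv : f ∘ neuronRescale P Q s d t = f)
    (θ : Params P Q s) :
    gOut f (neuronRescale P Q s d t θ) = Real.exp (d * t) • gOut f θ := by
  funext i
  have h := fderiv_map_apply_map_of_comp_eq _ hf hinv θ (0, Pi.single i 1, 0)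
  have hv : neuronRescale P Q s d t (0, Pi.single i 1, 0)
      = Real.exp (-(d * t)) • ((0 : Fin P → ℝ), (Pi.single i 1 : Fin Q → ℝ), (0 : Fin s → ℝ)) := by
    simp [neuronRescale_apply]
  rw [hv, map_smul, smul_eq_mul] at h
  simp only [gOut, Pi.smul_apply, smul_eq_mul, ← h, Real.exp_neg]
  field_simp

lemma gRest_neuronRescale (hf : Differentiable ℝ f) (hinv : f ∘ neuronRescale P Q s d t = f)
    (θ : Params P Q s) :
    gRest f (neuronRescale P Q s d t θ) = gRest f θ := by
  funext i
  have h := fderiv_map_apply_map_of_comp_eq _ hf hinv θ (0, 0, Pi.single i 1)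
  have hv : neuronRescale P Q s d t (0, 0, Pi.single i 1)
      = ((0 : Fin P → ℝ), (0 : Fin Q → ℝ), (Pi.single i 1 : Fin s → ℝ)) := by
    simp [neuronRescale_apply]
  rwa [hv] at h

end Rescale

/-- The paper's `E Tr[g gᵀ]`, for minibatch gradients `g_b = ∑ₓ c b x • g x` drawn with law `q`. -/
def batchSecondMoment {X B ι : Type*} [Fintype X] [Fintype B] [Fintype ι]
    (q : B → ℝ) (c : B → X → ℝ) (g : X → ι → ℝ) : ℝ :=
  ∑ b, q b * ∑ i, (∑ x, c b x * g x i) ^ 2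

lemma batchSecondMoment_smul {X B ι : Type*} [Fintype X] [Fintype B] [Fintype ι]
    (q : B → ℝ) (c : B → X → ℝ) (g : X → ι → ℝ) (a : ℝ) :
    batchSecondMoment q c (fun x => a • g x) = a ^ 2 * batchSecondMoment q c g := by
  simp only [batchSecondMoment, Pi.smul_apply, smul_eq_mul, mul_left_comm _ a, ← mul_sum,
    mul_pow, mul_left_comm _ (a ^ 2)]

lemma hasDerivAt_exp_mul_sq_zero (a : ℝ) :
    HasDerivAt (fun t => Real.exp (a * t) ^ 2) (2 * a) 0 := by
  have h := (((hasDerivAt_id (0 : ℝ)).const_mul a).exp).fun_pow 2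
  simpa using h

lemma eq_mul_of_isLocalMin_exp_sq {K η A B C d : ℝ} (hη : η ≠ 0)
    (hmin : IsLocalMin (fun t => K + η * (Real.exp (-t) ^ 2 * A + Real.exp (d * t) ^ 2 * B + C))
      0) :
    A = d * B := by
  have hneg : HasDerivAt (fun t => Real.exp (-t) ^ 2) (-2) 0 := by
    simpa using hasDerivAt_exp_mul_sq_zero (-1)
  have hderiv := ((((hneg.mul_const A).add ((hasDerivAt_exp_mul_sq_zero d).mul_const B)).add_const
    C).const_mul η).const_add K
  have h0 := hmin.hasDerivAt_eq_zero hderiv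
  have : -2 * A + 2 * d * B = 0 := (mul_eq_zero.1 h0).resolve_left hη
  linarith

theorem stmt12_general {P Q s : ℕ} {X B : Type} [Fintype X] [Fintype B]
    (p : X → ℝ)
    (q : B → ℝ)
    (c : B → X → ℝ)
    (ℓ : X → Params P Q s → ℝ) (hℓ : ∀ x, ContDiff ℝ 2 (ℓ x))
    (d : ℝ)
    (hsym : ∀ (x : X) (lam : ℝ) (win : Fin P → ℝ) (wout : Fin Q → ℝ)
        (rest : Fin s → ℝ),
      ℓ x (Real.exp lam • win, Real.exp (-(d * lam)) • wout, rest)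
        = ℓ x (win, wout, rest))
    (η : ℝ) (hη : 0 < η)
    (F : Params P Q s → ℝ)
    (hF : ∀ θ, F θ = (∑ x, p x * ℓ x θ)
      + (η / 4) * ∑ b, q b *
          ((∑ i, (∑ x, c b x * gIn (ℓ x) θ i) ^ 2)
            + (∑ i, (∑ x, c b x * gOut (ℓ x) θ i) ^ 2)
            + (∑ i, (∑ x, c b x * gRest (ℓ x) θ i) ^ 2)))
    (θstar : Params P Q s) (hmin : IsLocalMin F θstar) :
    ∑ b, q b * ∑ i, (∑ x, c b x * gIn (ℓ x) θstar i) ^ 2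
      = d * ∑ b, q b * ∑ i, (∑ x, c b x * gOut (ℓ x) θstar i) ^ 2 := by
  have hdiff x : Differentiable ℝ (ℓ x) := (hℓ x).differentiable (by norm_num)
  have hinv x t : ℓ x ∘ neuronRescale P Q s d t = ℓ x :=
    funext fun θ => hsym x t θ.1 θ.2.1 θ.2.2
  have hF' θ : F θ = ∑ x, p x * ℓ x θ + η / 4 * (batchSecondMoment q c (fun x => gIn (ℓ x) θ)
      + batchSecondMoment q c (fun x => gOut (ℓ x) θ)
      + batchSecondMoment q c (fun x => gRest (ℓ x) θ)) := by
    simp only [hF, batchSecondMoment, mul_add, sum_add_distrib]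
  have horbit : IsLocalMin (fun t => F (neuronRescale P Q s d t θstar)) 0 :=
    IsLocalMin.comp_continuous (g := fun t => neuronRescale P Q s d t θstar)
      (by simpa using hmin) (continuous_neuronRescale_apply d θstar).continuousAt
  change batchSecondMoment q c (fun x => gIn (ℓ x) θstar)
    = d * batchSecondMoment q c (fun x => gOut (ℓ x) θstar)
  refine eq_mul_of_isLocalMin_exp_sq (η := η / 4) (K := ∑ x, p x * ℓ x θstar)
    (C := batchSecondMoment q c (fun x => gRest (ℓ x) θstar)) (by positivity) ?_
  convert horbit using 2 with t
  simp only [hF', ← Function.comp_apply (f := ℓ _), hinv, gIn_neuronRescale (hdiff _) (hinv _ t),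
    gOut_neuronRescale (hdiff _) (hinv _ t), gRest_neuronRescale (hdiff _) (hinv _ t),
    batchSecondMoment_smul]

/-- (Polynomial network neuron imbalance.)  If the loss is invariant under
`w_in ↦ e^λ w_in, w_out ↦ e^{−dλ} w_out`, then at any local minimum of the entropic loss
with `γ = 0`, `E Tr[g_in g_inᵀ] = d · E Tr[g_out g_outᵀ]`. -/
theorem stmt12 {P Q s : ℕ} {X B : Type} [Fintype X] [Fintype B]
    (p : X → ℝ) (hp : ∀ x, 0 ≤ p x) (hp1 : ∑ x, p x = 1)
    (q : B → ℝ) (hq : ∀ b, 0 ≤ q b) (hq1 : ∑ b, q b = 1)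
    (c : B → X → ℝ) (hc : ∀ b x, 0 ≤ c b x) (hc1 : ∀ b, ∑ x, c b x = 1)
    (ℓ : X → Params P Q s → ℝ) (hℓ : ∀ x, ContDiff ℝ 2 (ℓ x))
    (d : ℝ)
    (hsym : ∀ (x : X) (lam : ℝ) (win : Fin P → ℝ) (wout : Fin Q → ℝ)
        (rest : Fin s → ℝ),
      ℓ x (Real.exp lam • win, Real.exp (-(d * lam)) • wout, rest)
        = ℓ x (win, wout, rest))
    (η : ℝ) (hη : 0 < η)
    (F : Params P Q s → ℝ)
    (hF : ∀ θ, F θ = (∑ x, p x * ℓ x θ)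
      + (η / 4) * ∑ b, q b *
          ((∑ i, (∑ x, c b x * gIn (ℓ x) θ i) ^ 2)
            + (∑ i, (∑ x, c b x * gOut (ℓ x) θ i) ^ 2)
            + (∑ i, (∑ x, c b x * gRest (ℓ x) θ i) ^ 2)))
    (θstar : Params P Q s) (hmin : IsLocalMin F θstar) :
    ∑ b, q b * ∑ i, (∑ x, c b x * gIn (ℓ x) θstar i) ^ 2
      = d * ∑ b, q b * ∑ i, (∑ x, c b x * gOut (ℓ x) θstar i) ^ 2 :=
  stmt12_general p q c ℓ hℓ d hsym η hη F hF θstar hmin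
end

section
/- If matrices W₁,…,W_D satisfy the balance conditions W_{i+1}ᵀ W_{i+1} = Wᵢ Wᵢᵀ for i = 1,…,D−1 and W_D ⋯ W₁ = M with SVD M = U_D S U₀ᵀ of rank d and all widths ≥ d, then there exist matrices Uᵢ with UᵢᵀUᵢ = I_d and diagonal sign matrices Pᵢ with ∏Pᵢ = I such that Wᵢ = Uᵢ Pᵢ S^{1/D} U_{i−1}ᵀ; in particular every Wᵢ has singular values equal to the D-th roots of the singular values of M. -/
/-!
Balance makes the Gram matrix of every partial product a power of the first one:
`(W_{k-1} ⋯ W_0)ᵀ (W_{k-1} ⋯ W_0) = (W_0ᵀ W_0)^k`. For `k = D` this is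
`Mᵀ M = U₀ S² U₀ᵀ = (U₀ Σ² U₀ᵀ)^D` with `Σ = S^{1/D}`, so uniqueness of positive semidefinite
`D`-th roots gives `W_0ᵀ W_0 = U₀ Σ² U₀ᵀ`. If `W_iᵀ W_i = U_i Σ² U_iᵀ` with `U_iᵀ U_i = 1`, then
`U_{i+1} := W_i U_i Σ⁻¹` has orthonormal columns and `W_i = U_{i+1} Σ U_iᵀ`, hence
`W_{i+1}ᵀ W_{i+1} = W_i W_iᵀ = U_{i+1} Σ² U_{i+1}ᵀ` and the argument moves one layer up.
Multiplying out the chain gives `M U₀ = U_D S`, which identifies `U_D` with the given left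
singular frame; all sign matrices can be taken to be the identity.
-/

open Matrix Finset

/-- Product `W_k ⋯ W_1` of a chain of layer matrices (`chainProd n W 0 = 1`). -/
def chainProd (n : ℕ → ℕ) (W : ∀ i : ℕ, Matrix (Fin (n (i + 1))) (Fin (n i)) ℝ) :
    ∀ k : ℕ, Matrix (Fin (n k)) (Fin (n 0)) ℝ
  | 0 => 1
  | k + 1 => W k * chainProd n W k

namespace CFC

lemma eq_of_pow_eq_pow {A : Type*} [PartialOrder A] [Ring A] [StarRing A]
    [TopologicalSpace A] [StarOrderedRing A] [Algebra ℝ A]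
    [ContinuousFunctionalCalculus ℝ A IsSelfAdjoint] [NonnegSpectrumClass ℝ A]
    [IsSemitopologicalRing A] [T2Space A]
    {a b : A} {k : ℕ} (hk : k ≠ 0) (ha : 0 ≤ a) (hb : 0 ≤ b) (h : a ^ k = b ^ k) : a = b := by
  have hk' : (k : ℝ) ≠ 0 := Nat.cast_ne_zero.mpr hk
  have root : ∀ c : A, 0 ≤ c → (c ^ k) ^ (k⁻¹ : ℝ) = c := fun c hc => by
    rw [← rpow_natCast c k, rpow_rpow_of_exponent_nonneg c _ _ (by positivity) (by positivity),
      mul_inv_cancel₀ hk', rpow_one c]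
  rw [← root a ha, h, root b hb]

end CFC

namespace Matrix

variable {m p r : Type*} [Fintype r] [DecidableEq r]

lemma mul_eq_self_of_transpose_mul_self_mul_eq [Fintype m] [Fintype p] {W : Matrix m p ℝ}
    {P : Matrix p p ℝ} (h : Wᵀ * W * P = Wᵀ * W) : W * P = W := by
  have hP : Pᵀ * (Wᵀ * W) = Wᵀ * W := by
    simpa [Matrix.transpose_mul, Matrix.mul_assoc] using congrArg transpose h
  have key : (W - W * P)ᴴ * (W - W * P) = 0 := by
    simp only [conjTranspose_eq_transpose_of_trivial, transpose_sub, transpose_mul,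
      Matrix.sub_mul, Matrix.mul_sub]
    rw [← Matrix.mul_assoc Wᵀ, h, ← Matrix.mul_assoc, Matrix.mul_assoc Pᵀ, hP, h, sub_self]
  exact (sub_eq_zero.mp (conjTranspose_mul_self_eq_zero.mp key)).symm

lemma mul_mul_transpose_eq_self [Fintype m] [Fintype p] {W : Matrix m p ℝ}
    {U : Matrix p r ℝ} {Λ : Matrix r r ℝ} (hU : Uᵀ * U = 1) (hW : Wᵀ * W = U * Λ * Uᵀ) :
    W * (U * Uᵀ) = W := by
  refine mul_eq_self_of_transpose_mul_self_mul_eq ?_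
  rw [hW]
  simp only [Matrix.mul_assoc]
  rw [← Matrix.mul_assoc Uᵀ, hU, Matrix.one_mul]

lemma conj_diagonal_mul_transpose [Fintype p] {V : Matrix m r ℝ} {U : Matrix p r ℝ}
    (hU : Uᵀ * U = 1) (σ : r → ℝ) :
    V * diagonal σ * Uᵀ * (V * diagonal σ * Uᵀ)ᵀ = V * diagonal (σ ^ 2) * Vᵀ := by
  simp only [transpose_mul, transpose_transpose, diagonal_transpose, Matrix.mul_assoc]
  rw [← Matrix.mul_assoc Uᵀ, hU, Matrix.one_mul, ← diagonal_pow, sq, Matrix.mul_assoc]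

lemma transpose_mul_conj_diagonal [Fintype m] {V : Matrix m r ℝ} {U : Matrix p r ℝ}
    (hV : Vᵀ * V = 1) (σ : r → ℝ) :
    (V * diagonal σ * Uᵀ)ᵀ * (V * diagonal σ * Uᵀ) = U * diagonal (σ ^ 2) * Uᵀ := by
  simpa [transpose_mul, Matrix.mul_assoc] using conj_diagonal_mul_transpose hV σ (V := U)

lemma conj_pow [Fintype p] [DecidableEq p] {U : Matrix p r ℝ} (hU : Uᵀ * U = 1)
    (A : Matrix r r ℝ) (k : ℕ) :
    (U * A * Uᵀ) ^ (k + 1) = U * A ^ (k + 1) * Uᵀ := by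
  induction k with
  | zero => simp
  | succ k ih =>
    rw [pow_succ, ih, pow_succ A (k + 1)]
    simp only [Matrix.mul_assoc]
    rw [← Matrix.mul_assoc Uᵀ, hU, Matrix.one_mul]

lemma posSemidef_conj_diagonal_sq [Fintype p] (U : Matrix p r ℝ) (σ : r → ℝ) :
    (U * diagonal (σ ^ 2) * Uᵀ).PosSemidef := by
  rw [← conjTranspose_eq_transpose_of_trivial]
  exact (posSemidef_diagonal_iff.mpr fun j => sq_nonneg (σ j)).mul_mul_conjTranspose_same U

lemma mul_diagonal_inv_transpose_mul_self [Fintype m] [Fintype p] {W : Matrix m p ℝ}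
    {U : Matrix p r ℝ} {σ : r → ℝ} (hσ : ∀ j, σ j ≠ 0) (hU : Uᵀ * U = 1)
    (hW : Wᵀ * W = U * diagonal (σ ^ 2) * Uᵀ) :
    (W * U * diagonal σ⁻¹)ᵀ * (W * U * diagonal σ⁻¹) = 1 := by
  calc (W * U * diagonal σ⁻¹)ᵀ * (W * U * diagonal σ⁻¹)
      = diagonal σ⁻¹ * (Uᵀ * (Wᵀ * W) * U) * diagonal σ⁻¹ := by
        simp only [transpose_mul, diagonal_transpose, Matrix.mul_assoc]
    _ = diagonal σ⁻¹ * ((Uᵀ * U) * diagonal (σ ^ 2) * (Uᵀ * U)) * diagonal σ⁻¹ := by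
        rw [hW]; simp only [Matrix.mul_assoc]
    _ = 1 := by
        rw [hU, Matrix.mul_one, Matrix.one_mul, diagonal_mul_diagonal, diagonal_mul_diagonal,
          ← diagonal_one]
        congr 1
        funext j
        simp only [Pi.inv_apply, Pi.pow_apply]
        field_simp [hσ j]

lemma mul_mul_diagonal_inv_mul_diagonal_mul_transpose [Fintype m] [Fintype p] {W : Matrix m p ℝ}
    {U : Matrix p r ℝ} {σ : r → ℝ} (hσ : ∀ j, σ j ≠ 0) (hU : Uᵀ * U = 1)
    (hW : Wᵀ * W = U * diagonal (σ ^ 2) * Uᵀ) :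
    W * U * diagonal σ⁻¹ * diagonal σ * Uᵀ = W := by
  have hσσ : diagonal σ⁻¹ * diagonal σ = (1 : Matrix r r ℝ) := by
    rw [diagonal_mul_diagonal, ← diagonal_one]
    congr 1
    funext j
    exact inv_mul_cancel₀ (hσ j)
  rw [Matrix.mul_assoc (W * U), hσσ, Matrix.mul_one, Matrix.mul_assoc,
    mul_mul_transpose_eq_self hU hW]

end Matrix

section Chain

variable {n : ℕ → ℕ} {W : ∀ i : ℕ, Matrix (Fin (n (i + 1))) (Fin (n i)) ℝ}

lemma chainProd_succ_mul_transpose_mul_self {k : ℕ}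
    (hbal : ∀ i < k, (W (i + 1))ᵀ * W (i + 1) = W i * (W i)ᵀ) :
    chainProd n W (k + 1) * ((W 0)ᵀ * W 0) = W k * (W k)ᵀ * chainProd n W (k + 1) := by
  induction k with
  | zero => simp [chainProd, Matrix.mul_assoc]
  | succ k ih =>
    rw [chainProd, Matrix.mul_assoc, ih fun i hi => hbal i (by omega), ← hbal k (by omega)]
    simp only [Matrix.mul_assoc]

lemma transpose_chainProd_mul_chainProd {k : ℕ}
    (hbal : ∀ i, i + 1 < k → (W (i + 1))ᵀ * W (i + 1) = W i * (W i)ᵀ) :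
    (chainProd n W k)ᵀ * chainProd n W k = ((W 0)ᵀ * W 0) ^ k := by
  induction k with
  | zero => simp [chainProd]
  | succ k ih =>
    rcases k with _ | k
    · simp [chainProd]
    · calc (chainProd n W (k + 2))ᵀ * chainProd n W (k + 2)
          = (chainProd n W (k + 1))ᵀ * ((W (k + 1))ᵀ * W (k + 1) * chainProd n W (k + 1)) := by
            simp only [chainProd, transpose_mul, Matrix.mul_assoc]
        _ = (chainProd n W (k + 1))ᵀ * chainProd n W (k + 1) * ((W 0)ᵀ * W 0) := by
            rw [hbal k (by omega), ← chainProd_succ_mul_transpose_mul_self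
              fun i hi => hbal i (by omega), Matrix.mul_assoc]
        _ = ((W 0)ᵀ * W 0) ^ (k + 2) := by
            rw [ih fun i hi => hbal i (by omega), ← pow_succ]

open scoped MatrixOrder in
lemma transpose_mul_self_zero_eq_of_chainProd_eq {k : ℕ} (hk : k ≠ 0)
    (hbal : ∀ i, i + 1 < k → (W (i + 1))ᵀ * W (i + 1) = W i * (W i)ᵀ)
    {r : Type*} [Fintype r] [DecidableEq r] {V : Matrix (Fin (n k)) r ℝ}
    {U : Matrix (Fin (n 0)) r ℝ} (hV : Vᵀ * V = 1) (hU : Uᵀ * U = 1) {σ : r → ℝ}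
    (h : chainProd n W k = V * diagonal (σ ^ k) * Uᵀ) :
    (W 0)ᵀ * W 0 = U * diagonal (σ ^ 2) * Uᵀ := by
  have hW₀ : ((W 0)ᵀ * W 0).PosSemidef := by
    simpa using posSemidef_conjTranspose_mul_self (W 0)
  refine CFC.eq_of_pow_eq_pow hk hW₀.nonneg (posSemidef_conj_diagonal_sq U σ).nonneg ?_
  obtain ⟨j, rfl⟩ := Nat.exists_eq_succ_of_ne_zero hk
  rw [← transpose_chainProd_mul_chainProd hbal, h, transpose_mul_conj_diagonal hV, conj_pow hU,
    diagonal_pow, ← pow_mul, ← pow_mul, mul_comm]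

lemma chainProd_mul_eq {r : Type*} [Fintype r] [DecidableEq r]
    {U : ∀ i, Matrix (Fin (n i)) r ℝ} {σ : r → ℝ} {k : ℕ}
    (hU : ∀ i < k, (U i)ᵀ * U i = 1) (hW : ∀ i < k, W i = U (i + 1) * diagonal σ * (U i)ᵀ) :
    chainProd n W k * U 0 = U k * diagonal (σ ^ k) := by
  induction k with
  | zero => simp [chainProd]
  | succ k ih =>
    rw [chainProd, Matrix.mul_assoc,
      ih (fun i hi => hU i (by omega)) fun i hi => hW i (by omega), hW k (by omega)]
    simp only [Matrix.mul_assoc]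
    rw [← Matrix.mul_assoc (U k)ᵀ, hU k (by omega), Matrix.one_mul, ← diagonal_pow,
      ← diagonal_pow, ← pow_succ']

end Chain

section Frames

variable {r : Type*} [Fintype r] [DecidableEq r]

noncomputable def balancedFrame (n : ℕ → ℕ)
    (W : ∀ i : ℕ, Matrix (Fin (n (i + 1))) (Fin (n i)) ℝ) (U₀ : Matrix (Fin (n 0)) r ℝ)
    (σ : r → ℝ) : ∀ i : ℕ, Matrix (Fin (n i)) r ℝ
  | 0 => U₀
  | i + 1 => W i * balancedFrame n W U₀ σ i * diagonal σ⁻¹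

variable {n : ℕ → ℕ} {W : ∀ i : ℕ, Matrix (Fin (n (i + 1))) (Fin (n i)) ℝ}

lemma balancedFrame_spec {U₀ : Matrix (Fin (n 0)) r ℝ} {σ : r → ℝ} {k : ℕ}
    (hσ : ∀ j, σ j ≠ 0) (hU₀ : U₀ᵀ * U₀ = 1)
    (hW₀ : (W 0)ᵀ * W 0 = U₀ * diagonal (σ ^ 2) * U₀ᵀ)
    (hbal : ∀ i, i + 1 < k → (W (i + 1))ᵀ * W (i + 1) = W i * (W i)ᵀ) :
    ∀ i < k, (balancedFrame n W U₀ σ i)ᵀ * balancedFrame n W U₀ σ i = 1 ∧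
      (W i)ᵀ * W i =
        balancedFrame n W U₀ σ i * diagonal (σ ^ 2) * (balancedFrame n W U₀ σ i)ᵀ
  | 0, _ => ⟨hU₀, hW₀⟩
  | i + 1, hi => by
    obtain ⟨hU, hW⟩ := balancedFrame_spec hσ hU₀ hW₀ hbal i (by omega)
    refine ⟨mul_diagonal_inv_transpose_mul_self hσ hU hW, ?_⟩
    rw [hbal i hi, ← mul_mul_diagonal_inv_mul_diagonal_mul_transpose hσ hU hW,
      conj_diagonal_mul_transpose hU]
    rfl

lemma balancedFrame_factorization {U₀ : Matrix (Fin (n 0)) r ℝ} {σ : r → ℝ} {k : ℕ}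
    (hσ : ∀ j, σ j ≠ 0) (hU₀ : U₀ᵀ * U₀ = 1)
    (hW₀ : (W 0)ᵀ * W 0 = U₀ * diagonal (σ ^ 2) * U₀ᵀ)
    (hbal : ∀ i, i + 1 < k → (W (i + 1))ᵀ * W (i + 1) = W i * (W i)ᵀ) :
    (∀ i ≤ k, (balancedFrame n W U₀ σ i)ᵀ * balancedFrame n W U₀ σ i = 1) ∧
      ∀ i < k, W i = balancedFrame n W U₀ σ (i + 1) * diagonal σ *
        (balancedFrame n W U₀ σ i)ᵀ := by
  have h := balancedFrame_spec hσ hU₀ hW₀ hbal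
  refine ⟨fun i hi => ?_, fun i hi =>
    (mul_mul_diagonal_inv_mul_diagonal_mul_transpose hσ (h i hi).1 (h i hi).2).symm⟩
  rcases i with _ | i
  · exact hU₀
  · exact mul_diagonal_inv_transpose_mul_self hσ (h i (by omega)).1 (h i (by omega)).2

end Frames

theorem stmt16_general {D d : ℕ} (hD : 1 ≤ D) (n : ℕ → ℕ)
    (M : Matrix (Fin (n D)) (Fin (n 0)) ℝ)
    (UD : Matrix (Fin (n D)) (Fin d) ℝ) (s : Fin d → ℝ)
    (U0 : Matrix (Fin (n 0)) (Fin d) ℝ)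
    (hs : ∀ j, 0 < s j) (hUD : UDᵀ * UD = 1) (hU0 : U0ᵀ * U0 = 1)
    (hSVD : M = UD * Matrix.diagonal s * U0ᵀ)
    (W : ∀ i : ℕ, Matrix (Fin (n (i + 1))) (Fin (n i)) ℝ)
    (hbalance : ∀ i, i + 1 < D → (W (i + 1))ᵀ * W (i + 1) = W i * (W i)ᵀ)
    (hconstraint : chainProd n W D = M) :
    ∃ (U : ∀ i : ℕ, Matrix (Fin (n i)) (Fin d) ℝ) (ε : ℕ → Fin d → ℝ),
      U 0 = U0 ∧ U D = UD ∧
      (∀ i ≤ D, (U i)ᵀ * U i = 1) ∧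
      (∀ i j, ε i j = 1 ∨ ε i j = -1) ∧
      (∀ j, ∏ i ∈ Finset.range D, ε i j = 1) ∧
      (∀ i < D, W i = U (i + 1) * Matrix.diagonal (ε i) *
        Matrix.diagonal (fun j => (s j) ^ ((D : ℝ)⁻¹)) * (U i)ᵀ) := by
  set σ : Fin d → ℝ := fun j => s j ^ ((D : ℝ)⁻¹)
  have hσ : ∀ j, σ j ≠ 0 := fun j => (Real.rpow_pos_of_pos (hs j) _).ne'
  have hσD : σ ^ D = s := funext fun j => Real.rpow_inv_natCast_pow (hs j).le (by omega)
  rw [← hσD] at hSVD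
  have hW₀ := transpose_mul_self_zero_eq_of_chainProd_eq (by omega) hbalance hUD hU0
    (hconstraint.trans hSVD)
  obtain ⟨hUorth, hWfac⟩ := balancedFrame_factorization hσ hU0 hW₀ hbalance
  set U := balancedFrame n W U0 σ
  have hUD' : U D = UD := by
    have h : chainProd n W D * U0 = U D * diagonal (σ ^ D) :=
      chainProd_mul_eq (fun i hi => hUorth i hi.le) hWfac
    rw [hconstraint, hSVD, Matrix.mul_assoc, hU0, Matrix.mul_one] at h
    ext a j
    simpa [mul_diagonal, hσ j] using (congrFun (congrFun h a) j).symm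
  refine ⟨U, fun _ _ => 1, rfl, hUD', hUorth, fun _ _ => Or.inl rfl, fun _ => prod_const_one,
    fun i hi => ?_⟩
  simpa using hWfac i hi

/-- If `W₁,…,W_D` satisfy the balance conditions `W_{i+1}ᵀW_{i+1} = WᵢWᵢᵀ` and
`W_D ⋯ W₁ = M` with SVD `M = U_D S U₀ᵀ` of rank `d` (all widths and all `rank Wᵢ` equal
to `d`), then `Wᵢ = U_{i+1} Pᵢ S^{1/D} Uᵢᵀ` for semi-orthogonal `Uᵢ` and diagonal sign
matrices `Pᵢ` with `∏ Pᵢ = 1`. -/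
theorem stmt16 {D d : ℕ} (hD : 1 ≤ D) (n : ℕ → ℕ) (hwidth : ∀ i ≤ D, d ≤ n i)
    (M : Matrix (Fin (n D)) (Fin (n 0)) ℝ) (hrank : M.rank = d)
    (UD : Matrix (Fin (n D)) (Fin d) ℝ) (s : Fin d → ℝ)
    (U0 : Matrix (Fin (n 0)) (Fin d) ℝ)
    (hs : ∀ j, 0 < s j) (hUD : UDᵀ * UD = 1) (hU0 : U0ᵀ * U0 = 1)
    (hSVD : M = UD * Matrix.diagonal s * U0ᵀ)
    (W : ∀ i : ℕ, Matrix (Fin (n (i + 1))) (Fin (n i)) ℝ)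
    (hWrank : ∀ i < D, (W i).rank = d)
    (hbalance : ∀ i, i + 1 < D → (W (i + 1))ᵀ * W (i + 1) = W i * (W i)ᵀ)
    (hconstraint : chainProd n W D = M) :
    ∃ (U : ∀ i : ℕ, Matrix (Fin (n i)) (Fin d) ℝ) (ε : ℕ → Fin d → ℝ),
      U 0 = U0 ∧ U D = UD ∧
      (∀ i ≤ D, (U i)ᵀ * U i = 1) ∧
      (∀ i j, ε i j = 1 ∨ ε i j = -1) ∧
      (∀ j, ∏ i ∈ Finset.range D, ε i j = 1) ∧
      (∀ i < D, W i = U (i + 1) * Matrix.diagonal (ε i) *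
        Matrix.diagonal (fun j => (s j) ^ ((D : ℝ)⁻¹)) * (U i)ᵀ) :=
  stmt16_general hD n M UD s U0 hs hUD hU0 hSVD W hbalance hconstraint
end
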